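/- arXiv:1503.08192 — 7 statements merged into one kernel-verified Lean document; each statement's English description precedes it below -/
import Mathlib

section
/- Let G = (V, E) be an undirected connected simple graph on the vertex set V = {1,…,N} with N ≥ 2. For each i ∈ V let a_i ∈ ℝ^N and b_i ∈ ℝ, let A ∈ ℝ^{N×N} be the matrix with rows a_1ᵀ,…,a_Nᵀ and b = (b_1,…,b_N)ᵀ, assume A is nonsingular, and let x* = A⁻¹ b. Let α_i > 0 for i ∈ V and β_{{i,j}} > 0 for {i,j} ∈ E, and define V(x) = Σ_{i ∈ V} α_i (a_iᵀ x_i − b_i)² + Σ_{{i,j} ∈ E} β_{{i,j}} ‖x_i − x_j‖² for x = (x_1,…,x_N) with each x_i ∈ ℝ^N. Then V(x) ≥ 0 for all x, and V(x) = 0 if and only if x_i = x* for every i ∈ V. -/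
open Matrix Finset

lemma dot_self_nonneg' {n : ℕ} (v : Fin n → ℝ) : 0 ≤ v ⬝ᵥ v :=
  Finset.sum_nonneg fun i _ => mul_self_nonneg (v i)

lemma dot_self_eq_zero' {n : ℕ} (v : Fin n → ℝ) (h : v ⬝ᵥ v = 0) : v = 0 := by
  funext k
  have := (Finset.sum_eq_zero_iff_of_nonneg
    (fun i _ => mul_self_nonneg (v i))).mp h k (Finset.mem_univ k)
  simpa using mul_self_eq_zero.mp this

/-- The Lyapunov function `V(x) = Σ_i α_i (a_iᵀ x_i - b_i)² + Σ_{{i,j}∈E} β_{ij} ‖x_i - x_j‖²`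
(the edge sum taken over unordered edges, represented by pairs `i < j` with `{i,j} ∈ E`)
is nonnegative, and it vanishes exactly when all the local estimates `x_i` equal the unique
solution `x* = A⁻¹ b` of `A x = b`. -/
theorem lyapunov_positive_definite
    (N : ℕ) (hN : 2 ≤ N) (G : SimpleGraph (Fin N)) [DecidableRel G.Adj]
    (hG : G.Connected)
    (a : Fin N → Fin N → ℝ) (b : Fin N → ℝ)
    (A : Matrix (Fin N) (Fin N) ℝ) (hA : A = Matrix.of a) (hdet : IsUnit A.det)
    (xstar : Fin N → ℝ) (hxstar : xstar = A⁻¹ *ᵥ b)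
    (α : Fin N → ℝ) (hα : ∀ i, 0 < α i)
    (β : Fin N → Fin N → ℝ) (hβsym : ∀ i j, β i j = β j i)
    (hβ : ∀ i j, G.Adj i j → 0 < β i j)
    (V : (Fin N → Fin N → ℝ) → ℝ)
    (hV : ∀ x : Fin N → Fin N → ℝ,
      V x = ∑ i : Fin N, α i * (a i ⬝ᵥ x i - b i) ^ 2 +
        ∑ p ∈ Finset.univ.filter (fun p : Fin N × Fin N => p.1 < p.2 ∧ G.Adj p.1 p.2),
          β p.1 p.2 * ((x p.1 - x p.2) ⬝ᵥ (x p.1 - x p.2))) :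
    (∀ x, 0 ≤ V x) ∧ (∀ x, V x = 0 ↔ ∀ i, x i = xstar) := by
  have hterm1 : ∀ (x : Fin N → Fin N → ℝ) (i : Fin N) , (i ∈ (Finset.univ : Finset (Fin N))) →
      0 ≤ α i * (a i ⬝ᵥ x i - b i) ^ 2 :=
    fun x i _ => mul_nonneg (hα i).le (sq_nonneg _)
  have hterm2 : ∀ (x : Fin N → Fin N → ℝ)
      (p : Fin N × Fin N), p ∈ Finset.univ.filter
        (fun p : Fin N × Fin N => p.1 < p.2 ∧ G.Adj p.1 p.2) →
      0 ≤ β p.1 p.2 * ((x p.1 - x p.2) ⬝ᵥ (x p.1 - x p.2)) := by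
    intro x p hp
    simp only [Finset.mem_filter] at hp
    exact mul_nonneg (hβ _ _ hp.2.2).le (dot_self_nonneg' _)
  have hsum1 : ∀ (x : Fin N → Fin N → ℝ), 0 ≤ ∑ i : Fin N, α i * (a i ⬝ᵥ x i - b i) ^ 2 :=
    fun (x : Fin N → Fin N → ℝ) => Finset.sum_nonneg (hterm1 x)
  have hsum2 : ∀ (x : Fin N → Fin N → ℝ), 0 ≤ ∑ p ∈ Finset.univ.filter
      (fun p : Fin N × Fin N => p.1 < p.2 ∧ G.Adj p.1 p.2),
      β p.1 p.2 * ((x p.1 - x p.2) ⬝ᵥ (x p.1 - x p.2)) :=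
    fun (x : Fin N → Fin N → ℝ) => Finset.sum_nonneg (hterm2 x)
  have hAb : A *ᵥ xstar = b := by
    rw [hxstar, Matrix.mulVec_mulVec, Matrix.mul_nonsing_inv _ hdet, Matrix.one_mulVec]
  constructor
  · intro x
    rw [hV x]
    exact add_nonneg (hsum1 x) (hsum2 x)
  · intro x
    constructor
    · intro h0
      rw [hV x] at h0
      have h1 : ∑ i : Fin N, α i * (a i ⬝ᵥ x i - b i) ^ 2 = 0 := by
        linarith [hsum1 x, hsum2 x]
      have h2 : ∑ p ∈ Finset.univ.filter
          (fun p : Fin N × Fin N => p.1 < p.2 ∧ G.Adj p.1 p.2),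
          β p.1 p.2 * ((x p.1 - x p.2) ⬝ᵥ (x p.1 - x p.2)) = 0 := by
        linarith [hsum1 x, hsum2 x]
      have hb : ∀ i, a i ⬝ᵥ x i = b i := by
        intro i
        have := (Finset.sum_eq_zero_iff_of_nonneg (hterm1 x)).mp h1 i (Finset.mem_univ i)
        have := (mul_eq_zero.mp this).resolve_left (ne_of_gt (hα i))
        have := pow_eq_zero_iff (n := 2) (by norm_num) |>.mp this
        linarith
      have hadj : ∀ i j, G.Adj i j → x i = x j := by
        have key : ∀ p : Fin N × Fin N, p.1 < p.2 → G.Adj p.1 p.2 → x p.1 = x p.2 := by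
          intro p hlt hadj
          have hp : p ∈ Finset.univ.filter
              (fun p : Fin N × Fin N => p.1 < p.2 ∧ G.Adj p.1 p.2) := by
            simp [hlt, hadj]
          have := (Finset.sum_eq_zero_iff_of_nonneg (hterm2 x)).mp h2 p hp
          have := (mul_eq_zero.mp this).resolve_left (ne_of_gt (hβ _ _ hadj))
          have := dot_self_eq_zero' _ this
          exact sub_eq_zero.mp this
        intro i j hij
        rcases lt_trichotomy i j with h | h | h
        · exact key (i, j) h hij
        · exact absurd h (G.ne_of_adj hij)
        · exact (key (j, i) h hij.symm).symm
      have hall : ∀ i j : Fin N, x i = x j := by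
        intro i j
        obtain ⟨w⟩ := hG i j
        induction w with
        | nil => rfl
        | cons h p ih => exact (hadj _ _ h).trans ih
      intro i
      have hAxi : A *ᵥ x i = b := by
        funext k
        rw [hA]
        show a k ⬝ᵥ x i = b k
        rw [hall i k]
        exact hb k
      have : A⁻¹ *ᵥ (A *ᵥ x i) = A⁻¹ *ᵥ b := by rw [hAxi]
      rwa [Matrix.mulVec_mulVec, Matrix.nonsing_inv_mul _ hdet, Matrix.one_mulVec,
        ← hxstar] at this
    · intro h
      rw [hV x]
      have e1 : ∀ i : Fin N, a i ⬝ᵥ x i = b i := by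
        intro i
        rw [h i]
        have : (A *ᵥ xstar) i = b i := by rw [hAb]
        rw [hA] at this
        exact this
      rw [Finset.sum_eq_zero (fun i _ => by rw [e1 i]; ring),
        Finset.sum_eq_zero (fun p _ => by rw [h p.1, h p.2]; simp), add_zero]
end

section
/- Let G = (V, E) be an undirected connected simple graph on V = {1,…,N} with N ≥ 2, let a_i ∈ ℝ^N for i ∈ V be such that the matrix A with rows a_1ᵀ,…,a_Nᵀ is nonsingular, let α_i > 0 for i ∈ V and β_{{i,j}} > 0 for {i,j} ∈ E. Let P ∈ ℝ^{N²×N²} be the block matrix P = blockdiag(α_1 a_1 a_1ᵀ, …, α_N a_N a_Nᵀ) + L_β ⊗ I_N, where L_β ∈ ℝ^{N×N} is the weighted Laplacian of G with (L_β)_{ii} = Σ_{j : {i,j} ∈ E} β_{{i,j}}, (L_β)_{ij} = −β_{{i,j}} if {i,j} ∈ E, and (L_β)_{ij} = 0 otherwise, and ⊗ is the Kronecker product. Then P is symmetric positive definite. -/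
/-
With `x_i = (x_{(i,k)})_k`, the quadratic form of `P` is
`∑ i, α i * (a_i ⬝ x_i) ^ 2 + ∑ k, (1 / 2) ∑_{i ~ j} β i j * (x_{(i,k)} - x_{(j,k)}) ^ 2`,
a sum of two positive semidefinite forms. If it vanishes, the Laplacian part forces `x_i = x_j`
along every edge, hence (`G` connected) `x_i = c` for all `i`; the block part then gives
`a_i ⬝ c = 0` for every `i`, i.e. `A c = 0`, so `c = 0` since `A` is nonsingular.
-/

open Matrix Finset
open scoped ComplexOrder Kronecker

open scoped MatrixOrder in
theorem Matrix.PosSemidef.blockDiagonal {𝕜 m o : Type*} [RCLike 𝕜] [Fintype m] [Fintype o]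
    [DecidableEq o] {M : o → Matrix m m 𝕜} (hM : ∀ k, (M k).PosSemidef) :
    (blockDiagonal M).PosSemidef := by
  classical
  choose B hB using fun k => CStarAlgebra.nonneg_iff_eq_star_mul_self.mp (hM k).nonneg
  obtain rfl : M = fun k => (B k)ᴴ * B k := funext hB
  simpa [blockDiagonal_mul, blockDiagonal_conjTranspose] using
    posSemidef_conjTranspose_mul_self (Matrix.blockDiagonal B)

theorem Matrix.PosSemidef.posDef_add_of_mulVec_eq_zero {𝕜 n : Type*} [RCLike 𝕜] [Fintype n]
    {A B : Matrix n n 𝕜} (hA : A.PosSemidef) (hB : B.PosSemidef)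
    (h : ∀ x, A *ᵥ x = 0 → B *ᵥ x = 0 → x = 0) : (A + B).PosDef := by
  refine PosDef.of_dotProduct_mulVec_pos (hA.isHermitian.add hB.isHermitian) fun x hx => ?_
  have hAx := hA.dotProduct_mulVec_nonneg x
  have hBx := hB.dotProduct_mulVec_nonneg x
  rw [add_mulVec, dotProduct_add]
  refine (add_nonneg hAx hBx).lt_of_ne fun hsum => hx ?_
  obtain ⟨hAx0, hBx0⟩ := (add_eq_zero_iff_of_nonneg hAx hBx).mp hsum.symm
  exact h x ((hA.dotProduct_mulVec_zero_iff x).mp hAx0) ((hB.dotProduct_mulVec_zero_iff x).mp hBx0)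

theorem Matrix.blockDiagonal_mulVec_apply {R m o : Type*} [NonUnitalNonAssocSemiring R]
    [Fintype m] [Fintype o] [DecidableEq o] (M : o → Matrix m m R) (x : m × o → R) (i : m) (k : o) :
    (blockDiagonal M *ᵥ x) (i, k) = (M k *ᵥ fun j => x (j, k)) i := by
  simp [mulVec, dotProduct, Fintype.sum_prod_type, blockDiagonal_apply]

theorem Matrix.kronecker_one_mulVec_apply {R m n : Type*} [NonAssocSemiring R] [Fintype m]
    [Fintype n] [DecidableEq n] (L : Matrix m m R) (x : m × n → R) (i : m) (k : n) :
    ((L ⊗ₖ (1 : Matrix n n R)) *ᵥ x) (i, k) = (L *ᵥ fun j => x (j, k)) i := by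
  simp [mulVec, dotProduct, Fintype.sum_prod_type, one_apply]

-- `blockDiagonal` indexes by (position, block); reindexing by `Prod.swap` puts the block first,
-- as in `L ⊗ₖ 1`.
theorem Matrix.blockDiagonal_submatrix_swap_mulVec_apply {R m o : Type*}
    [NonUnitalNonAssocSemiring R] [Fintype m] [Fintype o] [DecidableEq o] (M : o → Matrix m m R)
    (x : o × m → R) (i : o) (k : m) :
    ((blockDiagonal M).submatrix Prod.swap Prod.swap *ᵥ x) (i, k) = (M i *ᵥ fun j => x (i, j)) k := by
  rw [show (Prod.swap : o × m → m × o) = Equiv.prodComm o m from rfl, submatrix_mulVec_equiv]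
  exact blockDiagonal_mulVec_apply M _ k i

theorem Matrix.dotProduct_eq_zero_of_smul_vecMulVec_self_mulVec_eq_zero {R n : Type*} [CommRing R]
    [NoZeroDivisors R] [Fintype n] {c : R} (hc : c ≠ 0) {a v : n → R}
    (h : (c • vecMulVec a a) *ᵥ v = 0) : a ⬝ᵥ v = 0 := by
  simpa [smul_mulVec, vecMulVec_mulVec, dotProduct_smul, hc, dotProduct_comm v a] using
    congrArg (v ⬝ᵥ ·) h

namespace SimpleGraph

variable {V : Type*} [Fintype V] [DecidableEq V] (G : SimpleGraph V) [DecidableRel G.Adj]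
  (β : V → V → ℝ)

def weightedLapMatrix : Matrix V V ℝ :=
  Matrix.of fun i j =>
    if i = j then ∑ k ∈ univ.filter (G.Adj i), β i k else if G.Adj i j then -β i j else 0

variable {G β}

theorem weightedLapMatrix_mulVec_apply (x : V → ℝ) (i : V) :
    (G.weightedLapMatrix β *ᵥ x) i = ∑ j, if G.Adj i j then β i j * (x i - x j) else 0 := by
  have hsplit : ∀ j, G.weightedLapMatrix β i j * x j =
      (if i = j then (∑ k ∈ univ.filter (G.Adj i), β i k) * x i else 0) +
        if G.Adj i j then -(β i j * x j) else 0 := by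
    intro j
    by_cases hij : i = j
    · subst hij; simp [weightedLapMatrix]
    · by_cases hadj : G.Adj i j <;> simp [weightedLapMatrix, hij, hadj]
  rw [mulVec, dotProduct, sum_congr rfl fun j _ => hsplit j, sum_add_distrib, sum_ite_eq,
    if_pos (mem_univ i), sum_filter, sum_mul, ← sum_add_distrib]
  refine sum_congr rfl fun j _ => ?_
  split_ifs <;> ring

theorem isSymm_weightedLapMatrix (hβ : ∀ i j, β i j = β j i) : (G.weightedLapMatrix β).IsSymm := by
  ext i j
  by_cases hij : i = j
  · subst hij; rfl
  · simp [weightedLapMatrix, hij, Ne.symm hij, G.adj_comm i j, hβ i j]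

theorem dotProduct_weightedLapMatrix_mulVec (hβ : ∀ i j, β i j = β j i) (x : V → ℝ) :
    x ⬝ᵥ (G.weightedLapMatrix β *ᵥ x) =
      (∑ i, ∑ j, if G.Adj i j then β i j * (x i - x j) ^ 2 else 0) / 2 := by
  simp_rw [dotProduct, weightedLapMatrix_mulVec_apply, mul_sum, mul_ite, mul_zero]
  -- add the double sum to its copy with `i` and `j` exchanged
  rw [← add_self_div_two (∑ i, ∑ j, _)]
  conv_lhs => enter [1, 2]; rw [sum_comm]
  simp_rw [← sum_add_distrib]
  congr 1
  refine sum_congr rfl fun i _ => sum_congr rfl fun j _ => ?_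
  rw [if_congr (G.adj_comm j i) rfl rfl, hβ j i]
  split_ifs <;> ring

theorem posSemidef_weightedLapMatrix (hβsym : ∀ i j, β i j = β j i)
    (hβ : ∀ i j, G.Adj i j → 0 ≤ β i j) : (G.weightedLapMatrix β).PosSemidef := by
  refine .of_dotProduct_mulVec_nonneg ?_ fun x => ?_
  · rw [IsHermitian, conjTranspose_eq_transpose_of_trivial, isSymm_weightedLapMatrix hβsym]
  · rw [star_trivial, dotProduct_weightedLapMatrix_mulVec hβsym]
    refine div_nonneg (sum_nonneg fun i _ => sum_nonneg fun j _ => ?_) zero_le_two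
    split_ifs with hij
    · exact mul_nonneg (hβ i j hij) (sq_nonneg _)
    · exact le_rfl

theorem weightedLapMatrix_mulVec_eq_zero_iff_forall_adj (hβsym : ∀ i j, β i j = β j i)
    (hβ : ∀ i j, G.Adj i j → 0 < β i j) {x : V → ℝ} :
    G.weightedLapMatrix β *ᵥ x = 0 ↔ ∀ i j, G.Adj i j → x i = x j := by
  have hterm : ∀ i j, 0 ≤ if G.Adj i j then β i j * (x i - x j) ^ 2 else 0 := by
    intro i j
    split_ifs with hij
    · exact mul_nonneg (hβ i j hij).le (sq_nonneg _)
    · exact le_rfl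
  rw [← ((posSemidef_weightedLapMatrix hβsym fun i j h => (hβ i j h).le).dotProduct_mulVec_zero_iff x),
    star_trivial, dotProduct_weightedLapMatrix_mulVec hβsym, div_eq_zero_iff, or_iff_left two_ne_zero,
    sum_eq_zero_iff_of_nonneg fun i _ => sum_nonneg fun j _ => hterm i j]
  simp only [mem_univ, true_implies, sum_eq_zero_iff_of_nonneg fun j _ => hterm _ j]
  refine forall₂_congr fun i j => ?_
  by_cases hij : G.Adj i j
  · simp [hij, (hβ i j hij).ne', sub_eq_zero]
  · simp [hij]

theorem weightedLapMatrix_mulVec_eq_zero_iff_forall_reachable (hβsym : ∀ i j, β i j = β j i)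
    (hβ : ∀ i j, G.Adj i j → 0 < β i j) {x : V → ℝ} :
    G.weightedLapMatrix β *ᵥ x = 0 ↔ ∀ i j, G.Reachable i j → x i = x j := by
  rw [weightedLapMatrix_mulVec_eq_zero_iff_forall_adj hβsym hβ]
  refine ⟨?_, fun h i j hA => h i j hA.reachable⟩
  intro h i j ⟨w⟩
  induction w with
  | nil => rfl
  | cons hA _ ih => exact (h _ _ hA).trans ih

end SimpleGraph

theorem SimpleGraph.Preconnected.posDef_blockDiagonal_add_weightedLapMatrix_kronecker_one
    {V n : Type*} [Fintype V] [DecidableEq V] [Fintype n] [DecidableEq n] {G : SimpleGraph V}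
    [DecidableRel G.Adj] (hG : G.Preconnected) {β : V → V → ℝ} (hβsym : ∀ i j, β i j = β j i)
    (hβ : ∀ i j, G.Adj i j → 0 < β i j) {M : V → Matrix n n ℝ} (hM : ∀ i, (M i).PosSemidef)
    (hker : ∀ v, (∀ i, M i *ᵥ v = 0) → v = 0) :
    ((blockDiagonal M).submatrix Prod.swap Prod.swap + G.weightedLapMatrix β ⊗ₖ 1).PosDef := by
  refine ((PosSemidef.blockDiagonal hM).submatrix Prod.swap).posDef_add_of_mulVec_eq_zero
    ((posSemidef_weightedLapMatrix hβsym fun i j h => (hβ i j h).le).kronecker PosSemidef.one)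
    fun x hB hK => ?_
  have hconst : ∀ i j k, x (i, k) = x (j, k) := fun i j k =>
    (weightedLapMatrix_mulVec_eq_zero_iff_forall_reachable hβsym hβ).mp
      (funext fun i => by rw [← kronecker_one_mulVec_apply _ x, hK]; rfl) i j (hG i j)
  have hblock : ∀ i, M i *ᵥ (fun k => x (i, k)) = 0 := fun i => funext fun k => by
    rw [← blockDiagonal_submatrix_swap_mulVec_apply, hB]; rfl
  funext ⟨i, k⟩
  have : (fun l => x (i, l)) = 0 := hker _ fun j => by simpa only [hconst i j] using hblock j
  exact congrFun this k

theorem blockdiag_add_kronecker_laplacian_posdef_general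
    (N : ℕ) (G : SimpleGraph (Fin N)) [DecidableRel G.Adj]
    (hG : G.Connected)
    (a : Fin N → Fin N → ℝ)
    (A : Matrix (Fin N) (Fin N) ℝ) (hA : A = Matrix.of a) (hdet : IsUnit A.det)
    (α : Fin N → ℝ) (hα : ∀ i, 0 < α i)
    (β : Fin N → Fin N → ℝ) (hβsym : ∀ i j, β i j = β j i)
    (hβ : ∀ i j, G.Adj i j → 0 < β i j)
    (Lβ : Matrix (Fin N) (Fin N) ℝ)
    (hL : ∀ i j, Lβ i j =
      if i = j then ∑ k ∈ Finset.univ.filter (fun k => G.Adj i k), β i k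
      else if G.Adj i j then -β i j else 0)
    (P : Matrix (Fin N × Fin N) (Fin N × Fin N) ℝ)
    (hP : ∀ p q, P p q =
      (if p.1 = q.1 then α p.1 * (a p.1 p.2 * a p.1 q.2) else 0) +
        Lβ p.1 q.1 * (if p.2 = q.2 then 1 else 0)) :
    P.IsSymm ∧ P.PosDef := by
  have hLβ : Lβ = G.weightedLapMatrix β := Matrix.ext hL
  have hPeq : P = (blockDiagonal fun i => α i • vecMulVec (a i) (a i)).submatrix Prod.swap Prod.swap
      + Lβ ⊗ₖ 1 := by
    ext p q
    rw [hP]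
    simp [blockDiagonal_apply, one_apply, vecMulVec_apply]
  have hPD : P.PosDef := by
    rw [hPeq, hLβ]
    refine hG.preconnected.posDef_blockDiagonal_add_weightedLapMatrix_kronecker_one hβsym hβ
      (fun i => by simpa using (posSemidef_vecMulVec_self_star (a i)).smul (hα i).le)
      fun v hv => eq_zero_of_mulVec_eq_zero hdet.ne_zero (funext fun i => ?_)
    rw [hA]
    exact dotProduct_eq_zero_of_smul_vecMulVec_self_mulVec_eq_zero (hα i).ne' (hv i)
  exact ⟨isHermitian_iff_isSymm.mp hPD.isHermitian, hPD⟩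

/-- The matrix `P = blockdiag(α_1 a_1 a_1ᵀ, …, α_N a_N a_Nᵀ) + L_β ⊗ I_N`, where `L_β` is
the weighted Laplacian of the connected graph `G` and `A` (with rows `a_iᵀ`) is nonsingular,
is symmetric positive definite.  Here `P` is indexed by pairs `(i,k)`:
`P((i,k),(j,l)) = [i = j] α_i a_i(k) a_i(l) + L_β(i,j) [k = l]`. -/
theorem blockdiag_add_kronecker_laplacian_posdef
    (N : ℕ) (hN : 2 ≤ N) (G : SimpleGraph (Fin N)) [DecidableRel G.Adj]
    (hG : G.Connected)
    (a : Fin N → Fin N → ℝ)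
    (A : Matrix (Fin N) (Fin N) ℝ) (hA : A = Matrix.of a) (hdet : IsUnit A.det)
    (α : Fin N → ℝ) (hα : ∀ i, 0 < α i)
    (β : Fin N → Fin N → ℝ) (hβsym : ∀ i j, β i j = β j i)
    (hβ : ∀ i j, G.Adj i j → 0 < β i j)
    (Lβ : Matrix (Fin N) (Fin N) ℝ)
    (hL : ∀ i j, Lβ i j =
      if i = j then ∑ k ∈ Finset.univ.filter (fun k => G.Adj i k), β i k
      else if G.Adj i j then -β i j else 0)
    (P : Matrix (Fin N × Fin N) (Fin N × Fin N) ℝ)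
    (hP : ∀ p q, P p q =
      (if p.1 = q.1 then α p.1 * (a p.1 p.2 * a p.1 q.2) else 0) +
        Lβ p.1 q.1 * (if p.2 = q.2 then 1 else 0)) :
    P.IsSymm ∧ P.PosDef :=
  blockdiag_add_kronecker_laplacian_posdef_general N G hG a A hA hdet α hα β hβsym hβ Lβ hL P hP
end

section
/- Let G = (V, E) be an undirected connected simple graph on V = {1,…,N} with N ≥ 2. For each i ∈ V let a_i ∈ ℝ^N and b_i ∈ ℝ, assume the matrix A with rows a_1ᵀ,…,a_Nᵀ is nonsingular, and let x* = A⁻¹ b where b = (b_1,…,b_N)ᵀ. Let α_i > 0 for i ∈ V and β_{{i,j}} > 0 for {i,j} ∈ E. Then x = (x_1,…,x_N) ∈ (ℝ^N)^N satisfies the equilibrium equations 0 = −α_i (a_iᵀ x_i − b_i) a_i − Σ_{j : {i,j} ∈ E} β_{{i,j}} (x_i − x_j) for every i ∈ V if and only if x_i = x* for every i ∈ V. -/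
open Matrix Finset

/-- `x = (x_1, …, x_N)` satisfies the equilibrium equations
`0 = -α_i (a_iᵀ x_i - b_i) a_i - Σ_{j : {i,j} ∈ E} β_{ij} (x_i - x_j)` for every `i`
if and only if `x_i = x* = A⁻¹ b` for every `i`. -/
theorem equilibrium_iff_consensus_solution
    (N : ℕ) (hN : 2 ≤ N) (G : SimpleGraph (Fin N)) [DecidableRel G.Adj]
    (hG : G.Connected)
    (a : Fin N → Fin N → ℝ) (b : Fin N → ℝ)
    (A : Matrix (Fin N) (Fin N) ℝ) (hA : A = Matrix.of a) (hdet : IsUnit A.det)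
    (xstar : Fin N → ℝ) (hxstar : xstar = A⁻¹ *ᵥ b)
    (α : Fin N → ℝ) (hα : ∀ i, 0 < α i)
    (β : Fin N → Fin N → ℝ) (hβsym : ∀ i j, β i j = β j i)
    (hβ : ∀ i j, G.Adj i j → 0 < β i j)
    (x : Fin N → Fin N → ℝ) :
    (∀ i, (0 : Fin N → ℝ) =
        (-(α i * (a i ⬝ᵥ x i - b i))) • a i -
          ∑ j ∈ Finset.univ.filter (fun j => G.Adj i j), β i j • (x i - x j))
      ↔ ∀ i, x i = xstar := by
  have hNpos : 0 < N := lt_of_lt_of_le two_pos hN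
  -- A *ᵥ xstar = b
  have hAxs : A *ᵥ xstar = b := by
    rw [hxstar, Matrix.mulVec_mulVec, Matrix.mul_nonsing_inv A hdet, Matrix.one_mulVec]
  have hax : ∀ i, a i ⬝ᵥ xstar = b i := by
    intro i
    have := congrFun hAxs i
    simpa [Matrix.mulVec, hA] using this
  constructor
  · intro h
    -- e i := residual
    set e : Fin N → ℝ := fun i => a i ⬝ᵥ x i - b i with he
    set d : Fin N → Fin N → ℝ := fun i => x i - xstar with hd
    have had : ∀ i, a i ⬝ᵥ d i = e i := by
      intro i
      simp [hd, he, dotProduct_sub, hax i]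
    -- from the equation: the sum term dotted with d i equals -(α i * e i ^ 2)
    have key : ∀ i, (∑ j ∈ Finset.univ.filter (fun j => G.Adj i j),
        β i j * ((x i - x j) ⬝ᵥ d i)) = -(α i * e i ^ 2) := by
      intro i
      have h0 := congrArg (fun v => v ⬝ᵥ d i) (h i)
      have hsd : (∑ j ∈ Finset.univ.filter (fun j => G.Adj i j),
          β i j • (x i - x j)) ⬝ᵥ d i
          = ∑ j ∈ Finset.univ.filter (fun j => G.Adj i j), β i j * ((x i - x j) ⬝ᵥ d i) := by
        simp only [dotProduct, Finset.sum_apply, Pi.smul_apply, Pi.sub_apply,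
          Finset.sum_mul, smul_eq_mul, Finset.mul_sum, mul_sub, sub_mul, mul_assoc]
        rw [Finset.sum_comm]
      simp only [zero_dotProduct, sub_dotProduct, smul_dotProduct, smul_eq_mul, had i, hsd] at h0
      have hei : e i = a i ⬝ᵥ x i - b i := rfl
      rw [← hei] at h0
      simp only [sub_dotProduct]
      nlinarith [h0]
    -- rewrite filtered sums as sums with indicators
    have keyf : ∀ i, (∑ j, if G.Adj i j then β i j * ((x i - x j) ⬝ᵥ d i) else 0)
        = -(α i * e i ^ 2) := by
      intro i
      rw [← key i, Finset.sum_filter]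
    -- total energy identity
    have total : (∑ i, ∑ j, if G.Adj i j then β i j * ((x i - x j) ⬝ᵥ d i) else 0)
        = -(∑ i, α i * e i ^ 2) := by
      rw [← Finset.sum_neg_distrib]
      exact Finset.sum_congr rfl fun i _ => keyf i
    -- symmetrize: 2 * LHS = sum of β ‖x i - x j‖²
    have symm2 : (∑ i, ∑ j, if G.Adj i j then β i j * ((x i - x j) ⬝ᵥ (x i - x j)) else 0)
        = -(2 * ∑ i, α i * e i ^ 2) := by
      have hswap : (∑ i, ∑ j, if G.Adj i j then β i j * ((x i - x j) ⬝ᵥ d i) else 0)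
          = ∑ i, ∑ j, if G.Adj i j then β i j * ((x j - x i) ⬝ᵥ d j) else 0 := by
        rw [Finset.sum_comm]
        refine Finset.sum_congr rfl fun i _ => Finset.sum_congr rfl fun j _ => ?_
        by_cases hadj : G.Adj i j
        · simp [hadj, hadj.symm, hβsym i j]
        · have : ¬ G.Adj j i := fun hc => hadj hc.symm
          simp [hadj, this]
      have combine : ∀ i j, (if G.Adj i j then β i j * ((x i - x j) ⬝ᵥ (x i - x j)) else 0)
          = (if G.Adj i j then β i j * ((x i - x j) ⬝ᵥ d i) else 0)
            + (if G.Adj i j then β i j * ((x j - x i) ⬝ᵥ d j) else 0) := by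
        intro i j
        by_cases hadj : G.Adj i j
        · simp only [hadj, if_true]
          have : (x i - x j) ⬝ᵥ (x i - x j) = (x i - x j) ⬝ᵥ d i + (x j - x i) ⬝ᵥ d j := by
            simp only [hd, dotProduct_sub, sub_dotProduct]
            ring
          rw [this]; ring
        · simp [hadj]
      calc (∑ i, ∑ j, if G.Adj i j then β i j * ((x i - x j) ⬝ᵥ (x i - x j)) else 0)
          = (∑ i, ∑ j, if G.Adj i j then β i j * ((x i - x j) ⬝ᵥ d i) else 0)
            + (∑ i, ∑ j, if G.Adj i j then β i j * ((x j - x i) ⬝ᵥ d j) else 0) := by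
            rw [← Finset.sum_add_distrib]
            refine Finset.sum_congr rfl fun i _ => ?_
            rw [← Finset.sum_add_distrib]
            exact Finset.sum_congr rfl fun j _ => combine i j
        _ = -(2 * ∑ i, α i * e i ^ 2) := by rw [← hswap, total]; ring
    -- all terms vanish
    have hnonneg1 : ∀ i ∈ Finset.univ (α := Fin N), (0:ℝ) ≤ α i * e i ^ 2 :=
      fun i _ => mul_nonneg (hα i).le (sq_nonneg _)
    have hnonneg2 : ∀ i j, (0:ℝ) ≤ if G.Adj i j then β i j * ((x i - x j) ⬝ᵥ (x i - x j)) else 0 := by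
      intro i j
      by_cases hadj : G.Adj i j
      · simp only [hadj, if_true]
        exact mul_nonneg (hβ i j hadj).le (by
          simpa [dotProduct] using Finset.sum_nonneg fun k _ => mul_self_nonneg ((x i - x j) k))
      · simp [hadj]
    have hsum1 : (0:ℝ) ≤ ∑ i, α i * e i ^ 2 := Finset.sum_nonneg hnonneg1
    have hsum2 : (0:ℝ) ≤ ∑ i, ∑ j, if G.Adj i j then β i j * ((x i - x j) ⬝ᵥ (x i - x j)) else 0 :=
      Finset.sum_nonneg fun i _ => Finset.sum_nonneg fun j _ => hnonneg2 i j
    have hE : (∑ i, α i * e i ^ 2) = 0 := by linarith [symm2]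
    have hB : (∑ i, ∑ j, if G.Adj i j then β i j * ((x i - x j) ⬝ᵥ (x i - x j)) else 0) = 0 := by
      linarith [symm2]
    -- e i = 0 for all i
    have he0 : ∀ i, e i = 0 := by
      intro i
      have := (Finset.sum_eq_zero_iff_of_nonneg hnonneg1).mp hE i (Finset.mem_univ i)
      have := mul_eq_zero.mp this
      rcases this with h1 | h2
      · exact absurd h1 (hα i).ne'
      · exact (pow_eq_zero_iff two_ne_zero).mp h2
    -- x i = x j for adjacent
    have hadj_eq : ∀ i j, G.Adj i j → x i = x j := by
      intro i j hadj
      have hrow := (Finset.sum_eq_zero_iff_of_nonneg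
        (fun i _ => Finset.sum_nonneg fun j _ => hnonneg2 i j)).mp hB i (Finset.mem_univ i)
      have hterm := (Finset.sum_eq_zero_iff_of_nonneg
        (fun j _ => hnonneg2 i j)).mp hrow j (Finset.mem_univ j)
      rw [if_pos hadj] at hterm
      rcases mul_eq_zero.mp hterm with h1 | h2
      · exact absurd h1 (hβ i j hadj).ne'
      · have := dotProduct_self_eq_zero.mp h2
        exact sub_eq_zero.mp this
    -- connectivity: all x i equal
    have hwalk : ∀ {u v : Fin N} (w : G.Walk u v), x u = x v := by
      intro u v w
      induction w with
      | nil => rfl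
      | cons hadj p ih => exact (hadj_eq _ _ hadj).trans ih
    have hall : ∀ i j, x i = x j := fun i j => (hG i j).elim fun w => hwalk w
    -- conclude x i = xstar
    intro i
    have hAb : A *ᵥ x i = b := by
      funext k
      have hk : a k ⬝ᵥ x k = b k := by
        have := he0 k; simp [he] at this; linarith
      have : a k ⬝ᵥ x i = b k := by rw [hall i k] at *; exact hk
      simpa [Matrix.mulVec, hA] using this
    have : A⁻¹ *ᵥ (A *ᵥ x i) = x i := by
      rw [Matrix.mulVec_mulVec, Matrix.nonsing_inv_mul A hdet, Matrix.one_mulVec]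
    rw [hxstar, ← hAb, this]
  · intro h i
    have h1 : a i ⬝ᵥ x i - b i = 0 := by rw [h i, hax i]; ring
    have h2 : ∀ j, x i - x j = 0 := fun j => by rw [h i, h j]; simp
    simp [h1, h2]
end

section
/- Let G = (V, E) be an undirected connected simple graph on V = {1,…,N} with N ≥ 2. For each i ∈ V let a_i ∈ ℝ^N and b_i ∈ ℝ, assume the matrix A with rows a_1ᵀ,…,a_Nᵀ is nonsingular, and let x* = A⁻¹ b where b = (b_1,…,b_N)ᵀ. Let α_i > 0 for i ∈ V and β_{{i,j}} > 0 for {i,j} ∈ E. Then there exists a constant c > 0 such that every differentiable function x : [0,∞) → (ℝ^N)^N, x(t) = (x_1(t),…,x_N(t)), satisfying the system ẋ_i(t) = −α_i (a_iᵀ x_i(t) − b_i) a_i − Σ_{j : {i,j} ∈ E} β_{{i,j}} (x_i(t) − x_j(t)) for all i ∈ V and t ≥ 0 obeys ‖x(t) − x̄*‖ ≤ e^{−c t} ‖x(0) − x̄*‖ for all t ≥ 0, where x̄* = (x*,…,x*); in particular x_i(t) → x* as t → ∞ for every i ∈ V and every initial condition. -/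
open Matrix Finset Filter

/-! The energy `V(e) = Σᵢ ‖eᵢ‖²` of the error `eᵢ = xᵢ - x*` is a Lyapunov function. Since
`aᵢᵀ x* = bᵢ` and `β` is symmetric, along a solution `V' = -2 D(e)` with
`D(e) = Σᵢ αᵢ (aᵢᵀ eᵢ)² + ½ Σ_{i ~ j} βᵢⱼ ‖eᵢ - eⱼ‖²`. `D` vanishes only at `e = 0`: the
disagreement terms force all `eᵢ` to coincide (the graph is connected), and then the anchoring
terms give `A eᵢ = 0`. As `V` and `D` are continuous and homogeneous of degree two, compactness
of the unit sphere yields `D ≥ c V` for some `c > 0`, and Grönwall gives `V(t) ≤ e^{-2ct} V(0)`.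
-/

theorem homogeneous_eq_norm_sq_mul {E : Type*} [NormedAddCommGroup E] [NormedSpace ℝ E]
    {Q : E → ℝ} (hQ : ∀ (r : ℝ) e, Q (r • e) = r ^ 2 * Q e) (e : E) :
    Q e = ‖e‖ ^ 2 * Q (‖e‖⁻¹ • e) := by
  rcases eq_or_ne e 0 with rfl | he
  · simpa using hQ 0 0
  · rw [← hQ, smul_smul, mul_inv_cancel₀ (norm_ne_zero_iff.2 he), one_smul]

theorem exists_pos_mul_le_of_homogeneous {E : Type*} [NormedAddCommGroup E] [NormedSpace ℝ E]
    [FiniteDimensional ℝ E] {Φ Q : E → ℝ} (hΦ : Continuous Φ) (hQ : Continuous Q)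
    (hΦ_smul : ∀ (r : ℝ) e, Φ (r • e) = r ^ 2 * Φ e)
    (hQ_smul : ∀ (r : ℝ) e, Q (r • e) = r ^ 2 * Q e) (hQ_pos : ∀ e, e ≠ 0 → 0 < Q e) :
    ∃ c, 0 < c ∧ ∀ e, c * Φ e ≤ Q e := by
  obtain ⟨c, hc, hsphere⟩ : ∃ c, 0 < c ∧ ∀ w ∈ Metric.sphere (0 : E) 1, c * Φ w ≤ Q w := by
    rcases (Metric.sphere (0 : E) 1).eq_empty_or_nonempty with hS | hS
    · exact ⟨1, one_pos, by simp [hS]⟩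
    have hcpt : IsCompact (Metric.sphere (0 : E) 1) := isCompact_sphere 0 1
    obtain ⟨u, hu, hu_min⟩ := hcpt.exists_isMinOn hS hQ.continuousOn
    obtain ⟨v, -, hv_max⟩ := hcpt.exists_isMaxOn hS hΦ.continuousOn
    have hQu : 0 < Q u := hQ_pos u (ne_zero_of_mem_unit_sphere ⟨u, hu⟩)
    refine ⟨Q u / (|Φ v| + 1), by positivity, fun w hw => ?_⟩
    calc Q u / (|Φ v| + 1) * Φ w ≤ Q u / (|Φ v| + 1) * (|Φ v| + 1) := by
          gcongr
          linarith [le_abs_self (Φ v), show Φ w ≤ Φ v from hv_max hw]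
      _ = Q u := div_mul_cancel₀ _ (by positivity)
      _ ≤ Q w := hu_min hw
  refine ⟨c, hc, fun e => ?_⟩
  rw [homogeneous_eq_norm_sq_mul hΦ_smul e, homogeneous_eq_norm_sq_mul hQ_smul e, mul_left_comm]
  rcases eq_or_ne e 0 with rfl | he
  · simp
  refine mul_le_mul_of_nonneg_left (hsphere _ ?_) (sq_nonneg _)
  simp [norm_smul, he]

theorem Matrix.dotProduct_self_nonneg {n R : Type*} [Fintype n] [Ring R] [LinearOrder R]
    [IsStrictOrderedRing R] (v : n → R) : 0 ≤ v ⬝ᵥ v :=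
  Fintype.sum_nonneg fun i => mul_self_nonneg (v i)

theorem Matrix.dotProduct_nonsing_inv_mulVec {n R : Type*} [Fintype n] [DecidableEq n]
    [CommRing R] {a : n → n → R} (ha : IsUnit (of a).det) (b : n → R) (i : n) :
    a i ⬝ᵥ ((of a)⁻¹ *ᵥ b) = b i :=
  congrFun (show of a *ᵥ ((of a)⁻¹ *ᵥ b) = b by
    rw [mulVec_mulVec, mul_nonsing_inv _ ha, one_mulVec]) i

theorem Matrix.eq_zero_of_forall_dotProduct_eq_zero {n R : Type*} [Fintype n] [DecidableEq n]
    [CommRing R] {a : n → n → R} (ha : IsUnit (of a).det) {v : n → R}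
    (hv : ∀ i, a i ⬝ᵥ v = 0) : v = 0 := by
  refine mulVec_injective_of_isUnit ((isUnit_iff_isUnit_det (of a)).2 ha) ?_
  rw [mulVec_zero]
  exact funext hv

theorem le_mul_exp_of_hasDerivAt_le_mul {f f' : ℝ → ℝ} {K : ℝ}
    (hf : ∀ t, 0 ≤ t → HasDerivAt f (f' t) t) (bound : ∀ t, 0 ≤ t → f' t ≤ K * f t)
    {T : ℝ} (hT : 0 ≤ T) : f T ≤ f 0 * Real.exp (K * T) := by
  have h := le_gronwallBound_of_liminf_deriv_right_le (ε := 0)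
    (fun t ht => (hf t ht.1).continuousAt.continuousWithinAt)
    (fun t ht _ hr => (hf t ht.1).hasDerivWithinAt.liminf_right_slope_le hr)
    le_rfl (fun t ht => by simpa using bound t ht.1) T ⟨hT, le_rfl⟩
  rwa [gronwallBound_ε0, sub_zero] at h

theorem SimpleGraph.Preconnected.eq_of_forall_adj {V α : Type*} {G : SimpleGraph V}
    (hG : G.Preconnected) {f : V → α} (hf : ∀ i j, G.Adj i j → f i = f j) (i j : V) :
    f i = f j := by
  obtain ⟨w⟩ := hG i j
  induction w with
  | nil => rfl
  | cons h _ ih => exact (hf _ _ h).trans ih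

theorem sum_sum_mul_dotProduct_sub {ι m : Type*} [Fintype ι] [Fintype m] {w : ι → ι → ℝ}
    (hw : ∀ i j, w i j = w j i) (e : ι → m → ℝ) :
    ∑ i, ∑ j, w i j * (e i ⬝ᵥ (e i - e j)) =
      (1 / 2) * ∑ i, ∑ j, w i j * ((e i - e j) ⬝ᵥ (e i - e j)) := by
  have hswap : ∑ i, ∑ j, w i j * (e i ⬝ᵥ (e i - e j)) =
      ∑ i, ∑ j, w i j * (e j ⬝ᵥ (e j - e i)) := by
    rw [sum_comm]
    simp only [hw]
  have hsq : ∀ i j, (e i - e j) ⬝ᵥ (e i - e j) = e i ⬝ᵥ (e i - e j) + e j ⬝ᵥ (e j - e i) := by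
    intro i j
    simp only [dotProduct_sub, sub_dotProduct, dotProduct_comm (e j) (e i)]
    ring
  simp only [hsq, mul_add, sum_add_distrib, ← hswap]
  ring

namespace DistributedSolver

variable {ι m : Type*} [Fintype ι] [Fintype m]

def energy (e : ι → m → ℝ) : ℝ := ∑ i, e i ⬝ᵥ e i

theorem energy_smul (r : ℝ) (e : ι → m → ℝ) : energy (r • e) = r ^ 2 * energy e := by
  simp only [energy, Pi.smul_apply, smul_dotProduct, dotProduct_smul, smul_eq_mul, mul_sum]
  ring_nf

theorem continuous_energy : Continuous (energy : (ι → m → ℝ) → ℝ) := by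
  unfold energy
  fun_prop

theorem norm_le_sqrt_energy (e : ι → m → ℝ) : ‖e‖ ≤ √(energy e) := by
  refine (pi_norm_le_iff_of_nonneg (Real.sqrt_nonneg _)).2 fun i =>
    (pi_norm_le_iff_of_nonneg (Real.sqrt_nonneg _)).2 fun k => Real.abs_le_sqrt ?_
  calc e i k ^ 2 ≤ e i ⬝ᵥ e i :=
        (sq (e i k)).trans_le (single_le_sum (f := fun k => e i k * e i k)
          (fun k _ => mul_self_nonneg _) (mem_univ k))
    _ ≤ energy e := single_le_sum (f := fun i => e i ⬝ᵥ e i)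
          (fun i _ => dotProduct_self_nonneg _) (mem_univ i)

theorem hasDerivAt_energy_sub {x : ℝ → ι → m → ℝ} {x' : ι → m → ℝ} {t : ℝ}
    (hx : HasDerivAt x x' t) (y : m → ℝ) :
    HasDerivAt (fun s => energy fun i => x s i - y)
      (2 * ∑ i, (x t i - y) ⬝ᵥ x' i) t := by
  have hcoord : ∀ i k, HasDerivAt (fun s => x s i k - y k) (x' i k) t := fun i k =>
    (hasDerivAt_pi.1 (hasDerivAt_pi.1 hx i) k).sub_const _
  refine (HasDerivAt.fun_sum (u := univ) fun i _ => HasDerivAt.fun_sum (u := univ) fun k _ =>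
    (hcoord i k).mul (hcoord i k)).congr_deriv ?_
  simp only [dotProduct, mul_sum, Pi.sub_apply]
  exact sum_congr rfl fun i _ => sum_congr rfl fun k _ => by ring

variable (G : SimpleGraph ι) [DecidableRel G.Adj] (a : ι → m → ℝ) (α : ι → ℝ)
  (β : ι → ι → ℝ)

noncomputable def dissipation (e : ι → m → ℝ) : ℝ :=
  ∑ i, α i * (a i ⬝ᵥ e i) ^ 2 +
    (1 / 2) * ∑ i, ∑ j ∈ univ.filter (fun j => G.Adj i j), β i j * ((e i - e j) ⬝ᵥ (e i - e j))

def vectorField (b : ι → ℝ) (x : ι → m → ℝ) : ι → m → ℝ := fun i =>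
  (-(α i * (a i ⬝ᵥ x i - b i))) • a i -
    ∑ j ∈ univ.filter (fun j => G.Adj i j), β i j • (x i - x j)

theorem dissipation_smul (r : ℝ) (e : ι → m → ℝ) :
    dissipation G a α β (r • e) = r ^ 2 * dissipation G a α β e := by
  have hanchor : ∀ i, α i * (a i ⬝ᵥ (r • e) i) ^ 2 = r ^ 2 * (α i * (a i ⬝ᵥ e i) ^ 2) := by
    intro i
    simp only [Pi.smul_apply, dotProduct_smul, smul_eq_mul]
    ring
  have hedge : ∀ i j, β i j * (((r • e) i - (r • e) j) ⬝ᵥ ((r • e) i - (r • e) j)) =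
      r ^ 2 * (β i j * ((e i - e j) ⬝ᵥ (e i - e j))) := by
    intro i j
    simp only [Pi.smul_apply, ← smul_sub, dotProduct_smul, smul_dotProduct, smul_eq_mul]
    ring
  simp only [dissipation, hanchor, hedge, ← mul_sum]
  ring

theorem continuous_dissipation : Continuous (dissipation G a α β) := by
  unfold dissipation
  fun_prop

theorem vectorField_eq_vectorField_zero {b : ι → ℝ} {xstar : m → ℝ}
    (hb : ∀ i, a i ⬝ᵥ xstar = b i) (x : ι → m → ℝ) :
    vectorField G a α β b x = vectorField G a α β 0 fun i => x i - xstar := by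
  ext1 i
  simp only [vectorField, dotProduct_sub, hb, Pi.zero_apply, sub_zero, sub_sub_sub_cancel_right]

theorem sum_dotProduct_vectorField_zero (hβ : ∀ i j, β i j = β j i) (e : ι → m → ℝ) :
    ∑ i, e i ⬝ᵥ vectorField G a α β 0 e i = -dissipation G a α β e := by
  have hw : ∀ i j, (if G.Adj i j then β i j else 0) = if G.Adj j i then β j i else 0 := by
    intro i j
    by_cases h : G.Adj i j
    · rw [if_pos h, if_pos h.symm, hβ]
    · rw [if_neg h, if_neg fun h' => h h'.symm]
  have hlap := sum_sum_mul_dotProduct_sub hw e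
  simp only [ite_mul, zero_mul, ← sum_filter] at hlap
  have hpoint : ∀ i, e i ⬝ᵥ vectorField G a α β 0 e i =
      -(α i * (a i ⬝ᵥ e i) ^ 2) - ∑ j ∈ univ.filter (fun j => G.Adj i j),
        β i j * (e i ⬝ᵥ (e i - e j)) := by
    intro i
    simp only [vectorField, Pi.zero_apply, sub_zero, dotProduct_sub, dotProduct_smul,
      dotProduct_sum, smul_eq_mul, dotProduct_comm (e i) (a i)]
    ring
  rw [sum_congr rfl fun i _ => hpoint i, sum_sub_distrib, sum_neg_distrib, hlap, dissipation]
  ring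

theorem dissipation_nonneg (hα : ∀ i, 0 ≤ α i) (hβ : ∀ i j, G.Adj i j → 0 ≤ β i j)
    (e : ι → m → ℝ) : 0 ≤ dissipation G a α β e :=
  add_nonneg (sum_nonneg fun i _ => mul_nonneg (hα i) (sq_nonneg _))
    (mul_nonneg (by norm_num) (sum_nonneg fun i _ => sum_nonneg fun j hj =>
      mul_nonneg (hβ i j (mem_filter.1 hj).2) (dotProduct_self_nonneg _)))

theorem eq_zero_of_dissipation_eq_zero (hG : G.Preconnected)
    (ha : ∀ v, (∀ i, a i ⬝ᵥ v = 0) → v = 0) (hα : ∀ i, 0 < α i)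
    (hβ : ∀ i j, G.Adj i j → 0 < β i j) {e : ι → m → ℝ} (he : dissipation G a α β e = 0) :
    e = 0 := by
  have hanchor_nonneg : ∀ i ∈ univ, 0 ≤ α i * (a i ⬝ᵥ e i) ^ 2 :=
    fun i _ => mul_nonneg (hα i).le (sq_nonneg _)
  have hedge_nonneg : ∀ i ∈ univ, ∀ j ∈ univ.filter (fun j => G.Adj i j),
      0 ≤ β i j * ((e i - e j) ⬝ᵥ (e i - e j)) :=
    fun i _ j hj => mul_nonneg (hβ i j (mem_filter.1 hj).2).le (dotProduct_self_nonneg _)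
  obtain ⟨hanchor, hedge⟩ := (add_eq_zero_iff_of_nonneg (sum_nonneg hanchor_nonneg)
    (mul_nonneg (by norm_num) (sum_nonneg fun i hi => sum_nonneg (hedge_nonneg i hi)))).1 he
  have hdot : ∀ i, a i ⬝ᵥ e i = 0 := fun i => by
    simpa [(hα i).ne'] using (sum_eq_zero_iff_of_nonneg hanchor_nonneg).1 hanchor i (mem_univ i)
  have hadj : ∀ i j, G.Adj i j → e i = e j := fun i j hij => by
    have hsum := (sum_eq_zero_iff_of_nonneg fun i hi => sum_nonneg (hedge_nonneg i hi)).1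
      ((mul_eq_zero.1 hedge).resolve_left (by norm_num)) i (mem_univ i)
    have hterm := (sum_eq_zero_iff_of_nonneg (hedge_nonneg i (mem_univ i))).1 hsum j
      (by simpa using hij)
    rw [mul_eq_zero] at hterm
    exact sub_eq_zero.1 (dotProduct_self_eq_zero.1 (hterm.resolve_left (hβ i j hij).ne'))
  have hconst := hG.eq_of_forall_adj hadj
  funext i
  exact ha _ fun k => hconst k i ▸ hdot k

theorem dissipation_pos (hG : G.Preconnected) (ha : ∀ v, (∀ i, a i ⬝ᵥ v = 0) → v = 0)
    (hα : ∀ i, 0 < α i) (hβ : ∀ i j, G.Adj i j → 0 < β i j) {e : ι → m → ℝ} (he : e ≠ 0) :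
    0 < dissipation G a α β e :=
  (dissipation_nonneg G a α β (fun i => (hα i).le) (fun i j h => (hβ i j h).le) e).lt_of_ne
    fun h => he (eq_zero_of_dissipation_eq_zero G a α β hG ha hα hβ h.symm)

theorem sqrt_energy_le_of_hasDerivAt {b : ι → ℝ} {xstar : m → ℝ}
    (hb : ∀ i, a i ⬝ᵥ xstar = b i) (hβ : ∀ i j, β i j = β j i) {c : ℝ}
    (hcoer : ∀ e, c * energy e ≤ dissipation G a α β e) {x : ℝ → ι → m → ℝ}
    (hx : ∀ t, 0 ≤ t → HasDerivAt x (vectorField G a α β b (x t)) t) {t : ℝ} (ht : 0 ≤ t) :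
    √(energy fun i => x t i - xstar) ≤ Real.exp (-c * t) * √(energy fun i => x 0 i - xstar) := by
  have hderiv : ∀ s, 0 ≤ s → HasDerivAt (fun s => energy fun i => x s i - xstar)
      (-2 * dissipation G a α β fun i => x s i - xstar) s := by
    intro s hs
    convert hasDerivAt_energy_sub (hx s hs) xstar using 1
    rw [vectorField_eq_vectorField_zero G a α β hb, sum_dotProduct_vectorField_zero G a α β hβ]
    ring
  have hdecay := le_mul_exp_of_hasDerivAt_le_mul (K := -(2 * c)) hderiv
    (fun s _ => by linarith [hcoer fun i => x s i - xstar]) ht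
  have hexp : Real.exp (-(2 * c) * t) = Real.exp (-c * t) ^ 2 := by
    rw [sq, ← Real.exp_add]
    ring_nf
  calc √(energy fun i => x t i - xstar)
      ≤ √((energy fun i => x 0 i - xstar) * Real.exp (-(2 * c) * t)) := Real.sqrt_le_sqrt hdecay
    _ = Real.exp (-c * t) * √(energy fun i => x 0 i - xstar) := by
      rw [hexp, Real.sqrt_mul' _ (sq_nonneg _), Real.sqrt_sq (Real.exp_pos _).le, mul_comm]

theorem tendsto_of_sqrt_energy_le {x : ℝ → ι → m → ℝ} {xstar : m → ℝ} {c C : ℝ} (hc : 0 < c)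
    (h : ∀ t, 0 ≤ t → √(energy fun i => x t i - xstar) ≤ Real.exp (-c * t) * C) :
    Tendsto x atTop (nhds fun _ => xstar) := by
  rw [tendsto_iff_norm_sub_tendsto_zero]
  have hlim : Tendsto (fun t => Real.exp (-c * t) * C) atTop (nhds 0) := by
    simpa [neg_mul] using
      (Real.tendsto_exp_neg_atTop_nhds_zero.comp (tendsto_id.const_mul_atTop hc)).mul_const C
  refine squeeze_zero' (Eventually.of_forall fun t => norm_nonneg _) ?_ hlim
  filter_upwards [eventually_ge_atTop 0] with t ht
  exact (norm_le_sqrt_energy _).trans (h t ht)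

end DistributedSolver

open DistributedSolver

theorem distributed_solver_global_exponential_stability_general
    (N : ℕ) (G : SimpleGraph (Fin N)) [DecidableRel G.Adj]
    (hG : G.Connected)
    (a : Fin N → Fin N → ℝ) (b : Fin N → ℝ)
    (A : Matrix (Fin N) (Fin N) ℝ) (hA : A = Matrix.of a) (hdet : IsUnit A.det)
    (xstar : Fin N → ℝ) (hxstar : xstar = A⁻¹ *ᵥ b)
    (α : Fin N → ℝ) (hα : ∀ i, 0 < α i)
    (β : Fin N → Fin N → ℝ) (hβsym : ∀ i j, β i j = β j i)
    (hβ : ∀ i j, G.Adj i j → 0 < β i j) :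
    ∃ c : ℝ, 0 < c ∧
      ∀ x : ℝ → Fin N → Fin N → ℝ,
        (∀ i : Fin N, ∀ t : ℝ, 0 ≤ t →
          HasDerivAt (fun s => x s i)
            ((-(α i * (a i ⬝ᵥ x t i - b i))) • a i -
              ∑ j ∈ Finset.univ.filter (fun j => G.Adj i j), β i j • (x t i - x t j)) t) →
        (∀ t : ℝ, 0 ≤ t →
          Real.sqrt (∑ i : Fin N, (x t i - xstar) ⬝ᵥ (x t i - xstar)) ≤
            Real.exp (-c * t) *
              Real.sqrt (∑ i : Fin N, (x 0 i - xstar) ⬝ᵥ (x 0 i - xstar))) ∧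
        ∀ i : Fin N, Tendsto (fun t => x t i) atTop (nhds xstar) := by
  subst hxstar
  rw [hA] at hdet ⊢
  obtain ⟨c, hc, hcoer⟩ := exists_pos_mul_le_of_homogeneous continuous_energy
    (continuous_dissipation G a α β) energy_smul (dissipation_smul G a α β)
    fun e he => dissipation_pos G a α β hG.preconnected
      (fun _ => eq_zero_of_forall_dotProduct_eq_zero hdet) hα hβ he
  refine ⟨c, hc, fun x hx => ?_⟩
  have hdecay := fun t ht => sqrt_energy_le_of_hasDerivAt G a α β
    (dotProduct_nonsing_inv_mulVec hdet b) hβsym hcoer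
    (fun s hs => hasDerivAt_pi.2 fun i => hx i s hs) (t := t) ht
  exact ⟨hdecay, fun i => tendsto_pi_nhds.1 (tendsto_of_sqrt_energy_le hc hdecay) i⟩

/-- Global exponential stability of the distributed linear-equation solver: there is a
constant `c > 0` such that every differentiable solution of
`ẋ_i(t) = -α_i (a_iᵀ x_i(t) - b_i) a_i - Σ_{j : {i,j} ∈ E} β_{ij} (x_i(t) - x_j(t))`
satisfies `‖x(t) - x̄*‖ ≤ e^{-ct} ‖x(0) - x̄*‖` (Euclidean norm) for all `t ≥ 0`, where
`x̄* = (x*, …, x*)` and `x* = A⁻¹ b`; in particular `x_i(t) → x*` for every `i` and every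
initial condition. -/
theorem distributed_solver_global_exponential_stability
    (N : ℕ) (hN : 2 ≤ N) (G : SimpleGraph (Fin N)) [DecidableRel G.Adj]
    (hG : G.Connected)
    (a : Fin N → Fin N → ℝ) (b : Fin N → ℝ)
    (A : Matrix (Fin N) (Fin N) ℝ) (hA : A = Matrix.of a) (hdet : IsUnit A.det)
    (xstar : Fin N → ℝ) (hxstar : xstar = A⁻¹ *ᵥ b)
    (α : Fin N → ℝ) (hα : ∀ i, 0 < α i)
    (β : Fin N → Fin N → ℝ) (hβsym : ∀ i j, β i j = β j i)
    (hβ : ∀ i j, G.Adj i j → 0 < β i j) :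
    ∃ c : ℝ, 0 < c ∧
      ∀ x : ℝ → Fin N → Fin N → ℝ,
        (∀ i : Fin N, ∀ t : ℝ, 0 ≤ t →
          HasDerivAt (fun s => x s i)
            ((-(α i * (a i ⬝ᵥ x t i - b i))) • a i -
              ∑ j ∈ Finset.univ.filter (fun j => G.Adj i j), β i j • (x t i - x t j)) t) →
        (∀ t : ℝ, 0 ≤ t →
          Real.sqrt (∑ i : Fin N, (x t i - xstar) ⬝ᵥ (x t i - xstar)) ≤
            Real.exp (-c * t) *
              Real.sqrt (∑ i : Fin N, (x 0 i - xstar) ⬝ᵥ (x 0 i - xstar))) ∧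
        ∀ i : Fin N, Tendsto (fun t => x t i) atTop (nhds xstar) :=
  distributed_solver_global_exponential_stability_general N G hG a b A hA hdet xstar hxstar α hα β
    hβsym hβ
end

section
/- Let G = (V, E) be an undirected simple graph on V = {1,…,N} with N ≥ 1, and let S = { (M, v) ∈ ℝ^{N×N} × ℝ^N : M_{ij} = 0 whenever i ≠ j and {i,j} ∉ E } and S_c = { (M, v) ∈ S : the Krylov matrix K(M,v) is nonsingular }. Then S_c is dense in S (with respect to any norm on ℝ^{N×N} × ℝ^N): for every (M, v) ∈ S and every ε > 0 there exists (M_c, v_c) ∈ S_c with ‖M − M_c‖ < ε and ‖v − v_c‖ < ε. -/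
open Matrix

/-- The Krylov matrix whose `k`-th column (`k = 0,1,…,N-1`) is `M^k v`. -/
def krylov {N : ℕ} (M : Matrix (Fin N) (Fin N) ℝ) (v : Fin N → ℝ) :
    Matrix (Fin N) (Fin N) ℝ :=
  Matrix.of fun i k => ((M ^ (k : ℕ)) *ᵥ v) i

/-- Krylov matrix over a general commutative ring. -/
def krylov' {N : ℕ} {R : Type*} [CommRing R] (M : Matrix (Fin N) (Fin N) R) (v : Fin N → R) :
    Matrix (Fin N) (Fin N) R :=
  Matrix.of fun i k => ((M ^ (k : ℕ)) *ᵥ v) i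

lemma krylov'_eq_krylov {N : ℕ} (M : Matrix (Fin N) (Fin N) ℝ) (v : Fin N → ℝ) :
    krylov' M v = krylov M v := rfl

lemma krylov'_map {N : ℕ} {R S : Type*} [CommRing R] [CommRing S] (f : R →+* S)
    (M : Matrix (Fin N) (Fin N) R) (v : Fin N → R) :
    (krylov' M v).map f = krylov' (M.map f) (fun i => f (v i)) := by
  ext i k
  have hpow : (M ^ (k : ℕ)).map f = (M.map f) ^ (k : ℕ) := by
    have := map_pow (f.mapMatrix : Matrix (Fin N) (Fin N) R →+* Matrix (Fin N) (Fin N) S)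
      M (k : ℕ)
    simpa [RingHom.mapMatrix_apply] using this
  simp only [krylov', Matrix.map_apply, Matrix.of_apply, Matrix.mulVec, dotProduct,
    map_sum, _root_.map_mul]
  rw [← hpow]
  simp [Matrix.map_apply]

lemma krylov_diagonal {N : ℕ} (d : Fin N → ℝ) :
    krylov (Matrix.diagonal d) (fun _ => 1) = Matrix.vandermonde d := by
  ext i k
  simp [krylov, Matrix.diagonal_pow, Matrix.mulVec_diagonal, Matrix.vandermonde]

/-- The controllable pairs are dense among the pairs `(M, v)` whose sparsity pattern is
compatible with the graph `G` (`M_{ij} = 0` whenever `i ≠ j` and `{i,j} ∉ E`): for every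
such pair and every `ε > 0` there is a pair `(M_c, v_c)` with the same sparsity pattern,
nonsingular Krylov matrix `K(M_c, v_c)`, and all entries within `ε` of those of `(M, v)`. -/
theorem controllable_pairs_dense_in_sparsity_pattern
    (N : ℕ) (hN : 1 ≤ N) (G : SimpleGraph (Fin N))
    (M : Matrix (Fin N) (Fin N) ℝ) (v : Fin N → ℝ)
    (hM : ∀ i j, i ≠ j → ¬ G.Adj i j → M i j = 0)
    (ε : ℝ) (hε : 0 < ε) :
    ∃ (Mc : Matrix (Fin N) (Fin N) ℝ) (vc : Fin N → ℝ),
      (∀ i j, i ≠ j → ¬ G.Adj i j → Mc i j = 0) ∧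
      (krylov Mc vc).det ≠ 0 ∧
      (∀ i j, |M i j - Mc i j| < ε) ∧
      (∀ i, |v i - vc i| < ε) := by
  classical
  -- target pair: diagonal matrix with distinct entries and all-ones vector
  set d : Fin N → ℝ := fun i => (i : ℕ) with hd
  set M₀ : Matrix (Fin N) (Fin N) ℝ := Matrix.diagonal d with hM₀
  set v₀ : Fin N → ℝ := fun _ => 1 with hv₀
  -- polynomial family
  set A : Matrix (Fin N) (Fin N) (Polynomial ℝ) :=
    Matrix.of fun i j => Polynomial.C (M i j) + Polynomial.X * Polynomial.C (M₀ i j - M i j)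
    with hA
  set w : Fin N → Polynomial ℝ :=
    fun i => Polynomial.C (v i) + Polynomial.X * Polynomial.C (v₀ i - v i) with hw
  set q : Polynomial ℝ := (krylov' A w).det with hq
  have heval : ∀ t : ℝ, q.eval t =
      (krylov (Matrix.of fun i j => M i j + t * (M₀ i j - M i j))
        (fun i => v i + t * (v₀ i - v i))).det := by
    intro t
    have hAmap : A.map (Polynomial.evalRingHom t) =
        Matrix.of (fun i j => M i j + t * (M₀ i j - M i j)) := by
      ext i j; simp [hA]
    have hwmap : (fun i => (Polynomial.evalRingHom t) (w i)) =
        fun i => v i + t * (v₀ i - v i) := by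
      funext i; simp [hw]
    have h1 : ((krylov' A w).map (Polynomial.evalRingHom t)).det = q.eval t := by
      rw [show (krylov' A w).map ⇑(Polynomial.evalRingHom t)
          = (Polynomial.evalRingHom t).mapMatrix (krylov' A w) from rfl,
        ← RingHom.map_det]
      rfl
    rw [← h1, krylov'_map, hAmap, hwmap, krylov'_eq_krylov]
  -- q is nonzero because at t = 1 we get the Vandermonde determinant
  have hq1 : q.eval 1 ≠ 0 := by
    rw [heval 1]
    have hM0 : (Matrix.of fun i j => M i j + 1 * (M₀ i j - M i j)) = M₀ := by
      ext i j; simp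
    have hv0 : (fun i => v i + 1 * (v₀ i - v i)) = v₀ := by
      ext i; simp
    rw [hM0, hv0, hv₀]
    rw [show (fun _ : Fin N => (1:ℝ)) = fun _ => 1 from rfl, hM₀, krylov_diagonal]
    rw [Matrix.det_vandermonde_ne_zero_iff]
    intro i j hij
    have : ((i : ℕ) : ℝ) = ((j : ℕ) : ℝ) := hij
    exact Fin.ext (Nat.cast_injective this)
  have hqne : q ≠ 0 := fun h => hq1 (by simp [h])
  -- bound on the perturbation size
  set CM : ℝ := ∑ i, ∑ j, |M₀ i j - M i j| with hCM
  set Cv : ℝ := ∑ i, |v₀ i - v i| with hCv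
  set Cb : ℝ := CM + Cv + 1 with hCb
  have hCMnn : 0 ≤ CM := Finset.sum_nonneg fun i _ =>
    Finset.sum_nonneg fun j _ => abs_nonneg _
  have hCvnn : 0 ≤ Cv := Finset.sum_nonneg fun i _ => abs_nonneg _
  have hCbpos : 0 < Cb := by positivity
  have hMb : ∀ i j, |M₀ i j - M i j| ≤ Cb := by
    intro i j
    have h1 : |M₀ i j - M i j| ≤ ∑ j', |M₀ i j' - M i j'| :=
      Finset.single_le_sum (f := fun j' => |M₀ i j' - M i j'|)
        (fun j' _ => abs_nonneg _) (Finset.mem_univ j)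
    have h2 : (∑ j', |M₀ i j' - M i j'|) ≤ CM :=
      Finset.single_le_sum (f := fun i' => ∑ j', |M₀ i' j' - M i' j'|)
        (fun i' _ => Finset.sum_nonneg fun j' _ => abs_nonneg _) (Finset.mem_univ i)
    linarith
  have hvb : ∀ i, |v₀ i - v i| ≤ Cb := by
    intro i
    have h1 : |v₀ i - v i| ≤ Cv :=
      Finset.single_le_sum (f := fun i' => |v₀ i' - v i'|)
        (fun i' _ => abs_nonneg _) (Finset.mem_univ i)
    linarith
  -- pick a small t avoiding the finitely many roots of q
  have hδ : (0:ℝ) < ε / Cb := div_pos hε hCbpos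
  obtain ⟨t, htmem, htroot⟩ :=
    (Set.Ioo_infinite hδ).exists_notMem_finset q.roots.toFinset
  obtain ⟨ht0, htδ⟩ := htmem
  have hqt : q.eval t ≠ 0 := by
    intro h
    exact htroot (Multiset.mem_toFinset.mpr ((Polynomial.mem_roots hqne).mpr h))
  refine ⟨Matrix.of fun i j => M i j + t * (M₀ i j - M i j),
    fun i => v i + t * (v₀ i - v i), ?_, ?_, ?_, ?_⟩
  · intro i j hij hadj
    have h0 : M₀ i j = 0 := Matrix.diagonal_apply_ne d hij
    simp [hM i j hij hadj, h0]
  · rw [← heval t]; exact hqt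
  · intro i j
    have : |M i j - (M i j + t * (M₀ i j - M i j))| = t * |M₀ i j - M i j| := by
      rw [show M i j - (M i j + t * (M₀ i j - M i j)) = -(t * (M₀ i j - M i j)) by ring,
        abs_neg, abs_mul, abs_of_pos ht0]
    rw [Matrix.of_apply, this]
    calc t * |M₀ i j - M i j| ≤ t * Cb := by
          exact mul_le_mul_of_nonneg_left (hMb i j) ht0.le
      _ < (ε / Cb) * Cb := by exact mul_lt_mul_of_pos_right htδ hCbpos
      _ = ε := div_mul_cancel₀ ε hCbpos.ne'
  · intro i
    have : |v i - (v i + t * (v₀ i - v i))| = t * |v₀ i - v i| := by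
      rw [show v i - (v i + t * (v₀ i - v i)) = -(t * (v₀ i - v i)) by ring,
        abs_neg, abs_mul, abs_of_pos ht0]
    rw [this]
    calc t * |v₀ i - v i| ≤ t * Cb := mul_le_mul_of_nonneg_left (hvb i) ht0.le
      _ < (ε / Cb) * Cb := mul_lt_mul_of_pos_right htδ hCbpos
      _ = ε := div_mul_cancel₀ ε hCbpos.ne'
end

section
/- Let G = (V, E) be an undirected simple graph on V = {1,…,N} with N ≥ 1, and let W̄ ∈ ℝ^{N×N} satisfy W̄_{ij} = 0 whenever i ≠ j and {i,j} ∉ E. Index perturbations by the set F = { (i,i) : i ∈ V } ∪ { (i,j) : {i,j} ∈ E } of matrix positions allowed to be nonzero, and for δ ∈ ℝ^F let W(δ) ∈ ℝ^{N×N} be given by W(δ)_{ij} = W̄_{ij} + δ_{ij} for (i,j) ∈ F and W(δ)_{ij} = 0 otherwise. Then for (Lebesgue-)almost every (δ, v) ∈ ℝ^F × ℝ^N, the Krylov matrix K(W(δ), v) is nonsingular; that is, the set { (δ, v) : det K(W(δ), v) = 0 } has Lebesgue measure zero in ℝ^F × ℝ^N. -/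
open Matrix MeasureTheory

theorem Polynomial.measure_prod_setOf_eval_eq_zero {K α : Type*} [CommRing K] [IsDomain K]
    [MeasurableSpace K] [MeasurableSpace α] {ν : Measure K} [NullSingletonClass ν] [SFinite ν]
    {μ : Measure α} [SFinite μ] {f : α → Polynomial K}
    (hs : MeasurableSet {z : K × α | (f z.2).eval z.1 = 0}) (hf : ∀ᵐ x ∂μ, f x ≠ 0) :
    ν.prod μ {z : K × α | (f z.2).eval z.1 = 0} = 0 := by
  rw [Measure.prod_apply_symm hs, ← lintegral_zero]
  refine lintegral_congr_ae (hf.mono fun x hx => ?_)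
  exact (Polynomial.finite_setOfPred_isRoot hx).measure_zero ν

namespace MvPolynomial

theorem volume_setOf_eval_eq_zero_fin :
    ∀ {n : ℕ} {p : MvPolynomial (Fin n) ℝ}, p ≠ 0 → volume {x | eval x p = 0} = 0
  | 0, p, hp => by
    obtain ⟨c, rfl⟩ := C_surjective (Fin 0) p
    simp_all
  | n + 1, p, hp => by
    set q := finSuccEquiv ℝ n p
    have hlead : q.leadingCoeff ≠ 0 := Polynomial.leadingCoeff_ne_zero.mpr
      ((map_ne_zero_iff _ (finSuccEquiv ℝ n).injective).mpr hp)
    have hq : ∀ᵐ s : Fin n → ℝ, q.map (eval s) ≠ 0 := by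
      refine (measure_eq_zero_iff_ae_notMem.mp (volume_setOf_eval_eq_zero_fin hlead)).mono
        fun s hs hzero => hs ?_
      simpa [Polynomial.coeff_map] using congr_arg (Polynomial.coeff · q.natDegree) hzero
    have hmp := (volume_preserving_piFinSuccAbove (fun _ : Fin (n + 1) => ℝ) 0).symm
    have hpre : (MeasurableEquiv.piFinSuccAbove (fun _ => ℝ) 0).symm ⁻¹' {x | eval x p = 0} =
        {z : ℝ × (Fin n → ℝ) | (q.map (eval z.2)).eval z.1 = 0} := by
      ext ⟨y, s⟩
      simp [MeasurableEquiv.piFinSuccAbove, Fin.insertNthEquiv, Fin.insertNth_zero',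
        ← eval_eq_eval_mv_eval', q]
    rw [← hmp.measure_preimage_equiv, hpre]
    refine Polynomial.measure_prod_setOf_eval_eq_zero ?_ hq
    rw [← hpre]
    exact (continuous_eval p).measurable (measurableSet_singleton 0) |>.preimage
      (MeasurableEquiv.measurable _)

theorem volume_setOf_eval_eq_zero {σ : Type*} [Fintype σ] {p : MvPolynomial σ ℝ} (hp : p ≠ 0) :
    volume {x : σ → ℝ | eval x p = 0} = 0 := by
  let e := Fintype.equivFin σ
  have hmp := volume_measurePreserving_piCongrLeft (fun _ => ℝ) e
  have hpre : MeasurableEquiv.piCongrLeft (fun _ => ℝ) e ⁻¹' {y | eval y (rename e p) = 0} =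
      {x : σ → ℝ | eval x p = 0} := by
    ext x
    have hx : MeasurableEquiv.piCongrLeft (fun _ => ℝ) e x ∘ e = x :=
      _root_.funext (MeasurableEquiv.piCongrLeft_apply_apply (β := fun _ => ℝ) e x)
    simp only [Set.mem_preimage, Set.mem_ofPred_eq, eval_rename, hx]
  rw [← hpre, hmp.measure_preimage_equiv]
  exact volume_setOf_eval_eq_zero_fin
    ((rename_injective e e.injective).ne_iff' (map_zero _) |>.mpr hp)

theorem volume_prod_setOf_eval_sumElim_eq_zero {σ τ : Type*} [Fintype σ] [Fintype τ]
    {p : MvPolynomial (σ ⊕ τ) ℝ} (hp : p ≠ 0) :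
    volume {z : (σ → ℝ) × (τ → ℝ) | eval (Sum.elim z.1 z.2) p = 0} = 0 := by
  have hmp := volume_measurePreserving_sumPiEquivProdPi_symm fun _ : σ ⊕ τ => ℝ
  exact (hmp.measure_preimage_equiv {x | eval x p = 0}).trans (volume_setOf_eval_eq_zero hp)

end MvPolynomial

namespace Matrix

variable {n R : Type*} (P : n → n → Prop) [DecidableRel P]

/-- The paper's `W(δ)`, for the pattern `F = {(i, j) | P i j}`. -/
def perturbOn [Add R] [Zero R] (W : Matrix n n R) (δ : {q : n × n // P q.1 q.2} → R) :
    Matrix n n R :=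
  of fun i j => if h : P i j then W i j + δ ⟨(i, j), h⟩ else 0

theorem map_perturbOn {S : Type*} [NonAssocSemiring R] [NonAssocSemiring S] (f : R →+* S)
    (W : Matrix n n R) (δ : {q : n × n // P q.1 q.2} → R) :
    (W.perturbOn P δ).map f = (W.map f).perturbOn P (f ∘ δ) := by
  ext i j
  by_cases h : P i j <;> simp [perturbOn, h]

theorem perturbOn_sub_eq [AddCommGroup R] {W A : Matrix n n R} (hA : ∀ i j, ¬P i j → A i j = 0) :
    W.perturbOn P (fun q => A q.1.1 q.1.2 - W q.1.1 q.1.2) = A := by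
  ext i j
  by_cases h : P i j <;> simp [perturbOn, h, hA]

end Matrix

theorem krylov_map {R : Type*} [CommSemiring R] {N : ℕ} (f : R →+* ℝ)
    (M : Matrix (Fin N) (Fin N) R) (v : Fin N → R) :
    krylov (M.map f) (f ∘ v) = (of fun i k : Fin N => ((M ^ (k : ℕ)) *ᵥ v) i).map f := by
  ext i k
  simp [krylov, ← Matrix.map_pow, RingHom.map_mulVec]

theorem krylov_diagonal_one {N : ℕ} (d : Fin N → ℝ) : krylov (diagonal d) 1 = vandermonde d := by
  ext i k
  simp [krylov, diagonal_pow, mulVec_diagonal, vandermonde]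

theorem volume_setOf_det_krylov_perturbOn_eq_zero {N : ℕ} (P : Fin N → Fin N → Prop)
    [DecidableRel P] (hP : ∀ i, P i i) (W : Matrix (Fin N) (Fin N) ℝ) :
    volume {z : ({q : Fin N × Fin N // P q.1 q.2} → ℝ) × (Fin N → ℝ) |
      (krylov (W.perturbOn P z.1) z.2).det = 0} = 0 := by
  open MvPolynomial in
  let K := of fun i k : Fin N =>
    ((((W.map C).perturbOn P (X ∘ Sum.inl)) ^ (k : ℕ)) *ᵥ (X ∘ Sum.inr)) i
  have heval : ∀ δ v, eval (Sum.elim δ v) K.det = (krylov (W.perturbOn P δ) v).det := by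
    intro δ v
    rw [RingHom.map_det, RingHom.mapMatrix_apply, ← krylov_map, map_perturbOn]
    simp [Function.comp_def]
  simp_rw [← heval]
  refine MvPolynomial.volume_prod_setOf_eval_sumElim_eq_zero fun hK => ?_
  let d : Fin N → ℝ := fun i => (i : ℕ)
  have hdiag : W.perturbOn P (fun q => diagonal d q.1.1 q.1.2 - W q.1.1 q.1.2) = diagonal d :=
    perturbOn_sub_eq P fun i j hij => diagonal_apply_ne _ fun h => hij (h ▸ hP i)
  have hvdm := heval (fun q => diagonal d q.1.1 q.1.2 - W q.1.1 q.1.2) 1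
  rw [hK, map_zero, hdiag, krylov_diagonal_one] at hvdm
  exact det_vandermonde_ne_zero_iff.mpr (Nat.cast_injective.comp Fin.val_injective) hvdm.symm

theorem perturbed_krylov_ae_nonsingular_general
    (N : ℕ) (G : SimpleGraph (Fin N)) [DecidableRel G.Adj]
    (Wbar : Matrix (Fin N) (Fin N) ℝ) :
    volume {p : ({q : Fin N × Fin N // q.1 = q.2 ∨ G.Adj q.1 q.2} → ℝ) × (Fin N → ℝ) |
      (krylov (Matrix.of fun i j =>
        if h : i = j ∨ G.Adj i j then Wbar i j + p.1 ⟨(i, j), h⟩ else 0) p.2).det = 0}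
      = 0 :=
  volume_setOf_det_krylov_perturbOn_eq_zero (fun i j => i = j ∨ G.Adj i j) (fun _ => Or.inl rfl)
    Wbar

/-- Randomly perturbing the diagonal entries and the entries on edges of `W̄` (the positions
in `F = {(i,i)} ∪ {(i,j) : {i,j} ∈ E}`) makes the Krylov matrix almost surely nonsingular:
the set of perturbation-and-initial-condition pairs `(δ, v)` for which
`det K(W̄ + δ, v) = 0` has Lebesgue measure zero. -/
theorem perturbed_krylov_ae_nonsingular
    (N : ℕ) (hN : 1 ≤ N) (G : SimpleGraph (Fin N)) [DecidableRel G.Adj]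
    (Wbar : Matrix (Fin N) (Fin N) ℝ)
    (hW : ∀ i j, i ≠ j → ¬ G.Adj i j → Wbar i j = 0) :
    volume {p : ({q : Fin N × Fin N // q.1 = q.2 ∨ G.Adj q.1 q.2} → ℝ) × (Fin N → ℝ) |
      (krylov (Matrix.of fun i j =>
        if h : i = j ∨ G.Adj i j then Wbar i j + p.1 ⟨(i, j), h⟩ else 0) p.2).det = 0}
      = 0 :=
  perturbed_krylov_ae_nonsingular_general N G Wbar
end

section
/- Let G = (V, E) be an undirected connected simple graph on V = {1,…,N} with N ≥ 2. For each i ∈ V let a_i ∈ ℝ^N and b_i ∈ ℝ, assume the matrix A with rows a_1ᵀ,…,a_Nᵀ is nonsingular, let x* = A⁻¹ b where b = (b_1,…,b_N)ᵀ, let α_i > 0 for i ∈ V and β_{{i,j}} > 0 for {i,j} ∈ E, and let V(x) = Σ_{i ∈ V} α_i (a_iᵀ x_i − b_i)² + Σ_{{i,j} ∈ E} β_{{i,j}} ‖x_i − x_j‖². Then for every solution x : [0,∞) → (ℝ^N)^N of the system ẋ_i(t) = −α_i (a_iᵀ x_i(t) − b_i) a_i − Σ_{j : {i,j} ∈ E}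 β_{{i,j}} (x_i(t) − x_j(t)), the function t ↦ V(x(t)) is nonincreasing, and it is strictly positive for all t whenever x(0) ≠ (x*,…,x*). -/
/-!
With symmetric edge weights the distributed field is `-½ ∇V`, so along a solution
`d/dt V(x(t)) = -2 ‖ẋ(t)‖² ≤ 0`. The function `V` vanishes exactly when every agent satisfies its
own equation `a_iᵀ x_i = b_i` and all agents agree, which on a connected graph with `A` invertible
means `x = (x*, …, x*)`. That point is an equilibrium of the field, and the field is affine, hence
Lipschitz; by backward uniqueness of solutions, a trajectory with `V(x(t)) = 0` started at it.
-/

open Matrix Finset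

theorem HasDerivAt.dotProduct {𝕜 m : Type*} [NontriviallyNormedField 𝕜] [Fintype m]
    {u v : 𝕜 → m → 𝕜} {u' v' : m → 𝕜} {t : 𝕜} (hu : HasDerivAt u u' t)
    (hv : HasDerivAt v v' t) :
    HasDerivAt (fun s => u s ⬝ᵥ v s) (u' ⬝ᵥ v t + u t ⬝ᵥ v') t := by
  simp only [_root_.dotProduct, ← sum_add_distrib]
  exact HasDerivAt.fun_sum fun k _ => (hasDerivAt_pi.1 hu k).mul (hasDerivAt_pi.1 hv k)

theorem ODE_solution_eqOn_equilibrium_of_eq {E : Type*} [NormedAddCommGroup E]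
    [NormedSpace ℝ E] {v : E → E} {K : NNReal} (hv : LipschitzWith K v) {e : E} (he : v e = 0)
    {x : ℝ → E} {t₀ t : ℝ} (hx : ∀ s ∈ Set.Icc t₀ t, HasDerivAt x (v (x s)) s) (hxt : x t = e) :
    Set.EqOn x (fun _ => e) (Set.Icc t₀ t) :=
  ODE_solution_unique_of_mem_Icc_left (v := fun _ => v) (s := fun _ => Set.univ)
    (fun _ _ => hv.lipschitzOnWith)
    (fun s hs => (hx s hs).continuousAt.continuousWithinAt)
    (fun s hs => (hx s (Set.Ioc_subset_Icc_self hs)).hasDerivWithinAt) (fun _ _ => trivial)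
    continuousOn_const (fun s _ => by simpa [he] using (hasDerivAt_const s e).hasDerivWithinAt)
    (fun _ _ => trivial) hxt

namespace SimpleGraph

theorem Preconnected.eq_of_forall_adj_s15 {V β : Type*} {G : SimpleGraph V}
    (hG : G.Preconnected) {f : V → β} (hf : ∀ i j, G.Adj i j → f i = f j) (i j : V) :
    f i = f j := by
  obtain ⟨w⟩ := hG i j
  induction w with
  | nil => rfl
  | cons h _ ih => exact (hf _ _ h).trans ih

variable {ι : Type*} [Fintype ι] [LinearOrder ι] (G : SimpleGraph ι) [DecidableRel G.Adj]

def orderedEdges : Finset (ι × ι) :=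
  univ.filter fun p => p.1 < p.2 ∧ G.Adj p.1 p.2

theorem sum_orderedEdges_add_swap {M : Type*} [AddCommMonoid M] (f : ι → ι → M) :
    ∑ p ∈ G.orderedEdges, (f p.1 p.2 + f p.2 p.1) =
      ∑ i, ∑ j ∈ univ.filter (fun j => G.Adj i j), f i j := by
  simp only [orderedEdges, sum_filter, sum_add_distrib]
  rw [Fintype.sum_equiv (Equiv.prodComm ι ι)
    (fun p => if p.1 < p.2 ∧ G.Adj p.1 p.2 then f p.2 p.1 else 0)
    (fun p => if p.2 < p.1 ∧ G.Adj p.2 p.1 then f p.1 p.2 else 0) fun _ => rfl,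
    ← sum_add_distrib, Fintype.sum_prod_type]
  refine sum_congr rfl fun i _ => sum_congr rfl fun j _ => ?_
  rcases lt_trichotomy i j with h | rfl | h
  · simp [h, h.not_gt]
  · simp
  · simp [h, h.not_gt, G.adj_comm]

end SimpleGraph

theorem eq_const_inv_mulVec_of_dotProduct_eq {ι : Type*} [Fintype ι] [DecidableEq ι]
    {G : SimpleGraph ι} (hG : G.Preconnected) {a : ι → ι → ℝ} {b : ι → ℝ}
    (hdet : IsUnit (Matrix.of a).det) {y : ι → ι → ℝ} (hy : ∀ i, a i ⬝ᵥ y i = b i)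
    (hadj : ∀ i j, G.Adj i j → y i = y j) : y = fun _ => (Matrix.of a)⁻¹ *ᵥ b := by
  funext i
  have hAy : Matrix.of a *ᵥ y i = b := funext fun j => by
    change a j ⬝ᵥ y i = b j
    rw [hG.eq_of_forall_adj_s15 hadj i j, hy]
  rw [← hAy, mulVec_mulVec, nonsing_inv_mul _ hdet, one_mulVec]

section Dynamics

variable {ι m : Type*} [Fintype ι] [Fintype m] (G : SimpleGraph ι) [DecidableRel G.Adj]
  (a : ι → m → ℝ) (b : ι → ℝ) (α : ι → ℝ) (β : ι → ι → ℝ)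

noncomputable def distributedField (y : ι → m → ℝ) : ι → m → ℝ := fun i =>
  (-(α i * (a i ⬝ᵥ y i - b i))) • a i -
    ∑ j ∈ univ.filter (fun j => G.Adj i j), β i j • (y i - y j)

theorem distributedField_const_eq_zero {c : m → ℝ} (hc : ∀ i, a i ⬝ᵥ c = b i) :
    distributedField G a b α β (fun _ => c) = 0 := by
  funext i
  simp [distributedField, hc]

theorem isLinearMap_distributedField_zero : IsLinearMap ℝ (distributedField G a 0 α β) := by
  constructor <;> intros <;> funext i <;>
    simp only [distributedField, Pi.add_apply, Pi.smul_apply, Pi.zero_apply, sub_zero,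
      dotProduct_add, dotProduct_smul, smul_sub, smul_add, add_sub_add_comm, sum_add_distrib,
      smul_sum, smul_comm _ (β _ _)]
  all_goals module

theorem distributedField_eq_add_zero (y : ι → m → ℝ) :
    distributedField G a b α β y =
      distributedField G a 0 α β y + distributedField G a b α β 0 := by
  funext i
  simp only [distributedField, neg_smul, Pi.add_apply, Pi.zero_apply, sub_zero, dotProduct_zero,
    zero_sub, mul_neg, neg_neg, sub_self, smul_zero, sum_const_zero]
  module

theorem exists_lipschitzWith_distributedField :
    ∃ K, LipschitzWith K (distributedField G a b α β) := by
  let L := (isLinearMap_distributedField_zero G a α β (m := m)).mk'.toContinuousLinearMap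
  refine ⟨‖L‖₊, LipschitzWith.of_dist_le_mul fun y z => ?_⟩
  rw [distributedField_eq_add_zero, distributedField_eq_add_zero G a b α β z, dist_add_right]
  exact L.lipschitz.dist_le_mul y z

section Lyapunov

variable [LinearOrder ι]

noncomputable def lyapunov (y : ι → m → ℝ) : ℝ :=
  ∑ i, α i * (a i ⬝ᵥ y i - b i) ^ 2 +
    ∑ p ∈ G.orderedEdges, β p.1 p.2 * ((y p.1 - y p.2) ⬝ᵥ (y p.1 - y p.2))

noncomputable def lyapunovDeriv (y h : ι → m → ℝ) : ℝ :=
  ∑ i, α i * (2 * (a i ⬝ᵥ y i - b i) * (a i ⬝ᵥ h i)) +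
    ∑ p ∈ G.orderedEdges, β p.1 p.2 * (2 * ((y p.1 - y p.2) ⬝ᵥ (h p.1 - h p.2)))

variable {G a b α β}

theorem lyapunov_nonneg (hα : ∀ i, 0 ≤ α i) (hβ : ∀ i j, G.Adj i j → 0 ≤ β i j)
    (y : ι → m → ℝ) : 0 ≤ lyapunov G a b α β y := by
  refine add_nonneg (sum_nonneg fun i _ => by have := hα i; positivity) (sum_nonneg fun p hp => ?_)
  exact mul_nonneg (hβ _ _ (mem_filter.1 hp).2.2) (sum_nonneg fun _ _ => mul_self_nonneg _)

theorem lyapunov_eq_zero_iff (hα : ∀ i, 0 < α i) (hβ : ∀ i j, G.Adj i j → 0 < β i j)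
    (y : ι → m → ℝ) : lyapunov G a b α β y = 0 ↔
      (∀ i, a i ⬝ᵥ y i = b i) ∧ ∀ i j, G.Adj i j → y i = y j := by
  have hres : ∀ i ∈ univ, 0 ≤ α i * (a i ⬝ᵥ y i - b i) ^ 2 := fun i _ => by
    have := hα i; positivity
  have hedge : ∀ p ∈ G.orderedEdges, 0 ≤ β p.1 p.2 * ((y p.1 - y p.2) ⬝ᵥ (y p.1 - y p.2)) :=
    fun p hp =>
      mul_nonneg (hβ _ _ (mem_filter.1 hp).2.2).le (sum_nonneg fun _ _ => mul_self_nonneg _)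
  rw [lyapunov, add_eq_zero_iff_of_nonneg (sum_nonneg hres) (sum_nonneg hedge),
    sum_eq_zero_iff_of_nonneg hres, sum_eq_zero_iff_of_nonneg hedge]
  simp only [SimpleGraph.orderedEdges, mem_univ, true_imp_iff, mul_eq_zero, (hα _).ne',
    false_or, pow_eq_zero_iff two_ne_zero, sub_eq_zero, mem_filter, true_and, and_imp,
    Prod.forall, dotProduct_self_eq_zero]
  refine and_congr_right fun _ => ⟨fun h i j hij => ?_, fun h i j _ hij => .inr (h i j hij)⟩
  have hlt : ∀ i j, i < j → G.Adj i j → y i = y j := fun i j hlt hij =>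
    (h i j hlt hij).resolve_left (hβ i j hij).ne'
  rcases lt_trichotomy i j with hij' | rfl | hij'
  · exact hlt i j hij' hij
  · rfl
  · exact (hlt j i hij' hij.symm).symm

theorem hasDerivAt_lyapunov_comp {x : ℝ → ι → m → ℝ} {x' : ι → m → ℝ} {t : ℝ}
    (hx : HasDerivAt x x' t) :
    HasDerivAt (fun s => lyapunov G a b α β (x s)) (lyapunovDeriv G a b α β (x t) x') t := by
  have hxi : ∀ i, HasDerivAt (fun s => x s i) (x' i) t := hasDerivAt_pi.1 hx
  have hres : ∀ i, HasDerivAt (fun s => α i * (a i ⬝ᵥ x s i - b i) ^ 2)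
      (α i * (2 * (a i ⬝ᵥ x t i - b i) * (a i ⬝ᵥ x' i))) t := fun i => by
    have := (((hasDerivAt_const t (a i)).dotProduct (hxi i)).sub_const (b i)).pow 2
    exact (this.const_mul (α i)).congr_deriv (by simp)
  have hedge : ∀ p : ι × ι,
      HasDerivAt (fun s => β p.1 p.2 * ((x s p.1 - x s p.2) ⬝ᵥ (x s p.1 - x s p.2)))
        (β p.1 p.2 * (2 * ((x t p.1 - x t p.2) ⬝ᵥ (x' p.1 - x' p.2)))) t := fun p => by
    have hd : HasDerivAt (fun s => x s p.1 - x s p.2) (x' p.1 - x' p.2) t :=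
      (hxi p.1).sub (hxi p.2)
    exact ((hd.dotProduct hd).const_mul (β p.1 p.2)).congr_deriv (by
      rw [dotProduct_comm (x' p.1 - x' p.2)]; ring)
  exact (HasDerivAt.fun_sum fun i _ => hres i).add (HasDerivAt.fun_sum fun p _ => hedge p)

theorem lyapunovDeriv_eq (hβ : ∀ i j, β i j = β j i) (y h : ι → m → ℝ) :
    lyapunovDeriv G a b α β y h = -2 * ∑ i, distributedField G a b α β y i ⬝ᵥ h i := by
  have hswap : ∀ i j, β i j * ((y i - y j) ⬝ᵥ h i) + β j i * ((y j - y i) ⬝ᵥ h j) =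
      β i j * ((y i - y j) ⬝ᵥ (h i - h j)) := fun i j => by
    rw [hβ j i]
    simp only [dotProduct_sub, sub_dotProduct]
    ring
  have hedge : ∑ p ∈ G.orderedEdges, β p.1 p.2 * (2 * ((y p.1 - y p.2) ⬝ᵥ (h p.1 - h p.2))) =
      ∑ i, 2 * ∑ j ∈ univ.filter (fun j => G.Adj i j), β i j * ((y i - y j) ⬝ᵥ h i) := by
    rw [← mul_sum, ← G.sum_orderedEdges_add_swap, mul_sum]
    exact sum_congr rfl fun p _ => by rw [hswap]; ring
  rw [lyapunovDeriv, hedge, mul_sum, ← sum_add_distrib]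
  refine sum_congr rfl fun i _ => ?_
  simp only [distributedField, sub_dotProduct, smul_dotProduct, sum_dotProduct, smul_eq_mul]
  ring

theorem antitoneOn_lyapunov_comp (hβ : ∀ i j, β i j = β j i) {x : ℝ → ι → m → ℝ}
    (hx : ∀ t, 0 ≤ t → HasDerivAt x (distributedField G a b α β (x t)) t) :
    AntitoneOn (fun t => lyapunov G a b α β (x t)) (Set.Ici 0) := by
  have hV : ∀ t, 0 ≤ t → HasDerivAt (fun s => lyapunov G a b α β (x s))
      (-2 * ∑ i, distributedField G a b α β (x t) i ⬝ᵥ distributedField G a b α β (x t) i) t :=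
    fun t ht => (hasDerivAt_lyapunov_comp (hx t ht)).congr_deriv (lyapunovDeriv_eq hβ _ _)
  refine antitoneOn_of_hasDerivWithinAt_nonpos (convex_Ici 0)
    (fun t ht => (hV t ht).continuousAt.continuousWithinAt)
    (fun t ht => (hV t (interior_subset ht)).hasDerivWithinAt) fun t _ => ?_
  have := sum_nonneg fun i (_ : i ∈ univ) =>
    dotProduct_star_self_nonneg (distributedField G a b α β (x t) i)
  simp only [star_trivial] at this
  linarith

end Lyapunov

end Dynamics

theorem lyapunov_nonincreasing_and_positive_general
    (N : ℕ) (G : SimpleGraph (Fin N)) [DecidableRel G.Adj]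
    (hG : G.Connected)
    (a : Fin N → Fin N → ℝ) (b : Fin N → ℝ)
    (A : Matrix (Fin N) (Fin N) ℝ) (hA : A = Matrix.of a) (hdet : IsUnit A.det)
    (xstar : Fin N → ℝ) (hxstar : xstar = A⁻¹ *ᵥ b)
    (α : Fin N → ℝ) (hα : ∀ i, 0 < α i)
    (β : Fin N → Fin N → ℝ) (hβsym : ∀ i j, β i j = β j i)
    (hβ : ∀ i j, G.Adj i j → 0 < β i j)
    (V : (Fin N → Fin N → ℝ) → ℝ)
    (hV : ∀ x : Fin N → Fin N → ℝ,
      V x = ∑ i : Fin N, α i * (a i ⬝ᵥ x i - b i) ^ 2 +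
        ∑ p ∈ Finset.univ.filter (fun p : Fin N × Fin N => p.1 < p.2 ∧ G.Adj p.1 p.2),
          β p.1 p.2 * ((x p.1 - x p.2) ⬝ᵥ (x p.1 - x p.2)))
    (x : ℝ → Fin N → Fin N → ℝ)
    (hsol : ∀ i : Fin N, ∀ t : ℝ, 0 ≤ t →
      HasDerivAt (fun s => x s i)
        ((-(α i * (a i ⬝ᵥ x t i - b i))) • a i -
          ∑ j ∈ Finset.univ.filter (fun j => G.Adj i j), β i j • (x t i - x t j)) t) :
    (∀ s t : ℝ, 0 ≤ s → s ≤ t → V (x t) ≤ V (x s)) ∧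
    ((x 0 ≠ fun _ => xstar) → ∀ t : ℝ, 0 ≤ t → 0 < V (x t)) := by
  subst hxstar
  rw [hA] at hdet ⊢
  obtain rfl : V = lyapunov G a b α β := funext hV
  have hx : ∀ t, 0 ≤ t → HasDerivAt x (distributedField G a b α β (x t)) t :=
    fun t ht => hasDerivAt_pi.2 fun i => hsol i t ht
  refine ⟨fun s t hs hst => antitoneOn_lyapunov_comp hβsym hx hs (hs.trans hst) hst,
    fun h0 t ht => ?_⟩
  refine (lyapunov_nonneg (fun i => (hα i).le) (fun i j h => (hβ i j h).le) _).lt_of_ne'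
    fun hVt => h0 ?_
  obtain ⟨hres, hadj⟩ := (lyapunov_eq_zero_iff hα hβ _).1 hVt
  have hsolves : Matrix.of a *ᵥ ((Matrix.of a)⁻¹ *ᵥ b) = b := by
    rw [mulVec_mulVec, mul_nonsing_inv _ hdet, one_mulVec]
  obtain ⟨K, hK⟩ := exists_lipschitzWith_distributedField G a b α β (m := Fin N)
  exact ODE_solution_eqOn_equilibrium_of_eq hK
    (distributedField_const_eq_zero G a b α β (congrFun hsolves))
    (fun s hs => hx s hs.1) (eq_const_inv_mulVec_of_dotProduct_eq hG.preconnected hdet hres hadj)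
    ⟨le_rfl, ht⟩

/-- Along any solution of the distributed dynamics
`ẋ_i(t) = -α_i (a_iᵀ x_i(t) - b_i) a_i - Σ_{j : {i,j} ∈ E} β_{ij} (x_i(t) - x_j(t))`,
the Lyapunov function `V(x) = Σ_i α_i (a_iᵀ x_i - b_i)² + Σ_{{i,j}∈E} β_{ij} ‖x_i - x_j‖²`
is nonincreasing in `t`, and it stays strictly positive for all `t ≥ 0` whenever
`x(0) ≠ (x*, …, x*)` where `x* = A⁻¹ b`. -/
theorem lyapunov_nonincreasing_and_positive
    (N : ℕ) (hN : 2 ≤ N) (G : SimpleGraph (Fin N)) [DecidableRel G.Adj]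
    (hG : G.Connected)
    (a : Fin N → Fin N → ℝ) (b : Fin N → ℝ)
    (A : Matrix (Fin N) (Fin N) ℝ) (hA : A = Matrix.of a) (hdet : IsUnit A.det)
    (xstar : Fin N → ℝ) (hxstar : xstar = A⁻¹ *ᵥ b)
    (α : Fin N → ℝ) (hα : ∀ i, 0 < α i)
    (β : Fin N → Fin N → ℝ) (hβsym : ∀ i j, β i j = β j i)
    (hβ : ∀ i j, G.Adj i j → 0 < β i j)
    (V : (Fin N → Fin N → ℝ) → ℝ)
    (hV : ∀ x : Fin N → Fin N → ℝ,
      V x = ∑ i : Fin N, α i * (a i ⬝ᵥ x i - b i) ^ 2 +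
        ∑ p ∈ Finset.univ.filter (fun p : Fin N × Fin N => p.1 < p.2 ∧ G.Adj p.1 p.2),
          β p.1 p.2 * ((x p.1 - x p.2) ⬝ᵥ (x p.1 - x p.2)))
    (x : ℝ → Fin N → Fin N → ℝ)
    (hsol : ∀ i : Fin N, ∀ t : ℝ, 0 ≤ t →
      HasDerivAt (fun s => x s i)
        ((-(α i * (a i ⬝ᵥ x t i - b i))) • a i -
          ∑ j ∈ Finset.univ.filter (fun j => G.Adj i j), β i j • (x t i - x t j)) t) :
    (∀ s t : ℝ, 0 ≤ s → s ≤ t → V (x t) ≤ V (x s)) ∧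
    ((x 0 ≠ fun _ => xstar) → ∀ t : ℝ, 0 ≤ t → 0 < V (x t)) :=
  lyapunov_nonincreasing_and_positive_general N G hG a b A hA hdet xstar hxstar α hα β hβsym hβ V hV
    x hsol
end
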